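/- arXiv:2409.05579 — 2 statements merged into one kernel-verified Lean document; each statement's English description precedes it below -/
import Mathlib

section
/- Let d ≥ 2, E ⊂ [1,2], j ≥ 1, and 1 ≤ r ≤ q ≤ ∞. Then, with a constant independent of j and f, ‖V^r_E(𝒜_j f(x,·))‖_{L^q_x(ℝ^d)} ≲ ‖𝒜_j f(x, t_ν)‖_{L^q_x(ℓ^r_ν(Z_j(E)))} + sup_{h ∈ [0, 2^{−j}]} ‖2^{−j} (∂/∂t) 𝒜_j f(x, t_ν + h)‖_{L^q_x(ℓ^r_ν(Z_j(E)))} for all Schwartz functions f on ℝ^d. -/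
open MeasureTheory Real Set Metric FourierTransform
open scoped ENNReal NNReal RealInnerProductSpace Classical

noncomputable section

abbrev Ed (d : ℕ) := EuclideanSpace ℝ (Fin d)

/-- The spherical average `𝒜 f (x, t) = ∫_{S^{d-1}} f (x - t y) dσ(y)`,
where `σ` is the surface measure of the unit sphere. -/
noncomputable def sphAvg {d : ℕ} (f : Ed d → ℂ) (x : Ed d) (t : ℝ) : ℂ :=
  ∫ y : Metric.sphere (0 : Ed d) 1,
    f (x - t • (y : Ed d)) ∂((volume : Measure (Ed d)).toSphere)

/-- A Littlewood–Paley family `φ_j` with `Σ_{j ≥ 0} φ_j(s) = 1` for `s ≥ 0`,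
`φ_j(s) = φ_1(2^{-j+1} s)` for `j ≥ 1`, and `φ_1` supported in `[1/2, 4]`. -/
structure LPFamily where
  φ : ℕ → ℝ → ℝ
  smooth : ∀ j, ContDiff ℝ (⊤ : ℕ∞) (φ j)
  scaling : ∀ j : ℕ, 1 ≤ j → ∀ s : ℝ, φ j s = φ 1 ((2:ℝ) ^ (1 - (j:ℤ)) * s)
  supp_one : ∀ s : ℝ, φ 1 s ≠ 0 → s ∈ Set.Icc (1/2 : ℝ) 4
  sum_one : ∀ s : ℝ, 0 ≤ s → HasSum (fun j => φ j s) 1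

/-- The Littlewood–Paley frequency projection `P_j`, the Fourier multiplier
with symbol `φ_j (|ξ|)`. -/
noncomputable def Pproj {d : ℕ} (Φ : LPFamily) (j : ℕ) (f : Ed d → ℂ) : Ed d → ℂ :=
  𝓕⁻ (fun ξ : Ed d => (Φ.φ j ‖ξ‖ : ℂ) * 𝓕 f ξ)

/-- The frequency-localised spherical averaging operator `𝒜_j = 𝒜 ∘ P_j`. -/
noncomputable def Aj {d : ℕ} (Φ : LPFamily) (j : ℕ) (f : Ed d → ℂ) (x : Ed d) (t : ℝ) : ℂ :=
  sphAvg (Pproj Φ j f) x t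

/-- `T` is a cover of `E` by intervals `[t, t + δ]`, `t ∈ T`. -/
def IsIntervalCover (E : Set ℝ) (δ : ℝ) (T : Finset ℝ) : Prop :=
  E ⊆ ⋃ t ∈ T, Set.Icc t (t + δ)

/-- `T` is the set of left endpoints of a minimal cover of `E` by intervals of
length `δ`, with `δ`-separated left endpoints.  This is the set `Z_j(E)` when
`δ = 2^{-j}`. -/
def IsMinCover (E : Set ℝ) (δ : ℝ) (T : Finset ℝ) : Prop :=
  IsIntervalCover E δ T ∧
  (∀ s ∈ T, ∀ t ∈ T, s ≠ t → δ ≤ |s - t|) ∧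
  (∀ T' : Finset ℝ, IsIntervalCover E δ T' → T.card ≤ T'.card)

/-- The `ℓ^r`-sum `(Σ_{t ∈ T} v(t)^r)^{1/r}` (with the sup for `r = ∞`). -/
noncomputable def lrSum (r : ℝ≥0∞) (T : Finset ℝ) (v : ℝ → ℝ≥0∞) : ℝ≥0∞ :=
  if r = ∞ then T.sup v else (∑ t ∈ T, v t ^ r.toReal) ^ (1 / r.toReal)

/-- The mixed norm `‖g(x,ν)‖_{L^q_x(ℓ^r_ν(T))}`. -/
noncomputable def mixedNorm {d : ℕ} (q r : ℝ≥0∞) (T : Finset ℝ) (g : Ed d → ℝ → ℂ) : ℝ≥0∞ :=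
  if q = ∞ then essSup (fun x => lrSum r T fun t => (‖g x t‖₊ : ℝ≥0∞)) volume
  else (∫⁻ x, (lrSum r T fun t => (‖g x t‖₊ : ℝ≥0∞)) ^ q.toReal) ^ (1 / q.toReal)

/-- The `r`-variation `V^r_E F`:  the supremum over finite increasing sequences
`t_0 < t_1 < ⋯ < t_N` of points of `E` of `(Σ |F(t_{i+1}) - F(t_i)|^r)^{1/r}`
(with the natural modification for `r = ∞`). -/
noncomputable def Vvar (r : ℝ≥0∞) (E : Set ℝ) (F : ℝ → ℂ) : ℝ≥0∞ :=
  ⨆ (N : ℕ) (u : Fin (N + 1) → ℝ) (_ : StrictMono u) (_ : ∀ i, u i ∈ E),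
    if r = ∞ then ⨆ i : Fin N, (‖F (u i.succ) - F (u i.castSucc)‖₊ : ℝ≥0∞)
    else (∑ i : Fin N, (‖F (u i.succ) - F (u i.castSucc)‖₊ : ℝ≥0∞) ^ r.toReal) ^ (1 / r.toReal)

/-- The `L^q` norm (in `ℝ≥0∞`) of an `ℝ≥0∞`-valued function on `ℝ^d`. -/
noncomputable def lqNorm {d : ℕ} (q : ℝ≥0∞) (G : Ed d → ℝ≥0∞) : ℝ≥0∞ :=
  if q = ∞ then essSup G volume else (∫⁻ x, G x ^ q.toReal) ^ (1 / q.toReal)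

/-- `N(E,δ)`: the minimal number of intervals of length `δ` needed to cover `E`. -/
noncomputable def covNum (E : Set ℝ) (δ : ℝ) : ℕ :=
  sInf {n : ℕ | ∃ T : Finset ℝ, T.card = n ∧ IsIntervalCover E δ T}

/-- The upper Minkowski dimension of `E`. -/
noncomputable def dimMink (E : Set ℝ) : ℝ :=
  sInf {s : ℝ | 0 < s ∧ ∃ C : ℝ, 0 < C ∧
    ∀ δ : ℝ, δ ∈ Set.Ioo (0:ℝ) 1 → (covNum E δ : ℝ) ≤ C * δ ^ (-s)}

/-- The Assouad dimension of `E ⊆ [1,2]`. -/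
noncomputable def dimAssouad (E : Set ℝ) : ℝ :=
  sInf {s : ℝ | 0 < s ∧ ∃ C : ℝ, 0 < C ∧
    ∀ a b : ℝ, a < b → Set.Icc a b ⊆ Set.Icc (1:ℝ) 2 →
      ∀ δ : ℝ, δ ∈ Set.Ioo (0:ℝ) 1 →
        (covNum (E ∩ Set.Icc a b) δ : ℝ) ≤ C * (δ / (b - a)) ^ (-s)}

end


section helpers

lemma aux_rpow_add_rpow_le {p : ℝ} (hp : 1 ≤ p) (x y : ℝ≥0∞) :
    x ^ p + y ^ p ≤ (x + y) ^ p := by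
  have hp0 : p ≠ 0 := by positivity
  have h1 : (0:ℝ) ≤ 1 / p := by positivity
  have h2 : 1 / p ≤ 1 := by
    rw [div_le_one (by positivity)]; exact hp
  have h := ENNReal.rpow_add_le_add_rpow (x ^ p) (y ^ p) h1 h2
  rw [← ENNReal.rpow_mul, ← ENNReal.rpow_mul, mul_one_div_cancel hp0, ENNReal.rpow_one,
    ENNReal.rpow_one] at h
  calc x ^ p + y ^ p = ((x ^ p + y ^ p) ^ (1/p)) ^ p := by
        rw [← ENNReal.rpow_mul, one_div_mul_cancel hp0, ENNReal.rpow_one]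
    _ ≤ (x + y) ^ p := ENNReal.rpow_le_rpow h (by positivity)

lemma aux_sum_rpow_le {ι : Type*} (s : Finset ι) (f : ι → ℝ≥0∞) {p : ℝ} (hp : 1 ≤ p) :
    ∑ i ∈ s, f i ^ p ≤ (∑ i ∈ s, f i) ^ p := by
  classical
  induction s using Finset.induction with
  | empty => simp [ENNReal.zero_rpow_of_pos (lt_of_lt_of_le one_pos hp)]
  | @insert a s ha ih =>
      rw [Finset.sum_insert ha, Finset.sum_insert ha]
      exact le_trans (add_le_add_right ih _) (aux_rpow_add_rpow_le hp _ _)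

lemma aux_add_rpow_le {p : ℝ} (hp : 1 ≤ p) (x y : ℝ≥0∞) :
    (x + y) ^ p ≤ 2 ^ p * (x ^ p + y ^ p) := by
  have hp0 : (0:ℝ) ≤ p := by positivity
  rcases le_total x y with h | h
  · calc (x + y) ^ p ≤ (2 * y) ^ p := by
          apply ENNReal.rpow_le_rpow _ hp0
          rw [two_mul]; exact add_le_add_left h _
      _ = 2 ^ p * y ^ p := ENNReal.mul_rpow_of_nonneg _ _ hp0
      _ ≤ 2 ^ p * (x ^ p + y ^ p) := by
          exact mul_le_mul_right (le_add_self : y ^ p ≤ x ^ p + y ^ p) _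
  · calc (x + y) ^ p ≤ (2 * x) ^ p := by
          apply ENNReal.rpow_le_rpow _ hp0
          rw [two_mul]; exact add_le_add_right h _
      _ = 2 ^ p * x ^ p := ENNReal.mul_rpow_of_nonneg _ _ hp0
      _ ≤ 2 ^ p * (x ^ p + y ^ p) := by
          exact mul_le_mul_right (le_self_add : x ^ p ≤ x ^ p + y ^ p) _

lemma aux_add4_rpow_le {p : ℝ} (hp : 1 ≤ p) (a b c d : ℝ≥0∞) :
    (a + b + c + d) ^ p ≤ 4 ^ p * (a ^ p + b ^ p + c ^ p + d ^ p) := by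
  have hp0 : (0:ℝ) ≤ p := by positivity
  have h1 : (a + b + c + d) ^ p ≤ 2 ^ p * ((a + b) ^ p + (c + d) ^ p) := by
    have := aux_add_rpow_le hp (a + b) (c + d)
    rw [show a + b + c + d = a + b + (c + d) by ring] at *
    exact this
  refine h1.trans ?_
  have h2 := aux_add_rpow_le hp a b
  have h3 := aux_add_rpow_le hp c d
  calc 2 ^ p * ((a + b) ^ p + (c + d) ^ p)
      ≤ 2 ^ p * (2 ^ p * (a ^ p + b ^ p) + 2 ^ p * (c ^ p + d ^ p)) := by
        exact mul_le_mul_right (add_le_add h2 h3) _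
    _ = 2 ^ p * 2 ^ p * (a ^ p + b ^ p + c ^ p + d ^ p) := by ring
    _ = 4 ^ p * (a ^ p + b ^ p + c ^ p + d ^ p) := by
        rw [← ENNReal.mul_rpow_of_nonneg _ _ hp0]; norm_num

lemma aux_jensen_rpow {α : Type*} [MeasurableSpace α] (μ : Measure α) (w : α → ℝ≥0∞)
    (hw : AEMeasurable w μ) {p : ℝ} (hp : 1 ≤ p) :
    (∫⁻ a, w a ∂μ) ^ p ≤ μ Set.univ ^ (p - 1) * ∫⁻ a, w a ^ p ∂μ := by
  rcases eq_or_lt_of_le hp with h1 | h1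
  · simp [← h1]
  · have hpq : p.HolderConjugate p.conjExponent := Real.HolderConjugate.conjExponent h1
    have h := ENNReal.lintegral_mul_le_Lp_mul_Lq μ hpq hw aemeasurable_const
      (f := w) (g := fun _ => 1)
    simp only [Pi.mul_apply, mul_one, ENNReal.one_rpow, lintegral_one] at h
    have h2 := ENNReal.rpow_le_rpow h (le_trans zero_le_one hp : (0:ℝ) ≤ p)
    rw [ENNReal.mul_rpow_of_nonneg _ _ (le_trans zero_le_one hp)] at h2
    rw [← ENNReal.rpow_mul, ← ENNReal.rpow_mul, one_div_mul_cancel hpq.ne_zero,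
      ENNReal.rpow_one] at h2
    have hq : 1 / p.conjExponent * p = p - 1 := by
      have := hpq.inv_add_inv_eq_one
      have hp0 : p ≠ 0 := hpq.ne_zero
      field_simp at this ⊢
      nlinarith [this]
    rw [hq] at h2
    exact h2.trans_eq (mul_comm _ _)

end helpers
section pproj

lemma pproj_bounds {d : ℕ} (Φ : LPFamily) {j : ℕ} (hj : 1 ≤ j) (f : SchwartzMap (Ed d) ℂ) :
    ∃ C₀ C₁ C₂ : ℝ≥0,
      (∀ x, ‖Pproj Φ j (⇑f) x‖ ≤ C₀) ∧
      LipschitzWith C₁ (Pproj Φ j (⇑f)) ∧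
      (∀ x, HasFDerivAt (Pproj Φ j (⇑f)) (fderiv ℝ (Pproj Φ j (⇑f)) x) x) ∧
      (∀ x, ‖fderiv ℝ (Pproj Φ j (⇑f)) x‖ ≤ C₁) ∧
      LipschitzWith C₂ (fderiv ℝ (Pproj Φ j (⇑f))) := by
  classical
  set g0 : Ed d → ℂ := fun ξ => (Φ.φ j ‖ξ‖ : ℂ) * 𝓕 (⇑f) ξ with hg0def
  set g : Ed d → ℂ := fun ξ => g0 (-ξ) with hgdef
  have hPg : Pproj Φ j (⇑f) = 𝓕 g := by
    rw [Pproj, Real.fourierInv_eq_fourier_comp_neg]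
  -- continuity of `g`
  have hfc : Continuous (𝓕 (⇑f)) := by
    have h := Real.contDiff_fourier (f := (⇑f)) (N := 0)
      (fun n _ => f.integrable_pow_mul volume n)
    exact h.continuous
  have hg0c : Continuous g0 := by
    exact (Complex.continuous_ofReal.comp ((Φ.smooth j).continuous.comp continuous_norm)).mul hfc
  have hgc : Continuous g := hg0c.comp continuous_neg
  -- compact support of `g`
  set R : ℝ := (2:ℝ) ^ ((j:ℤ) + 1) with hRdef
  have hg0supp : ∀ ξ : Ed d, R < ‖ξ‖ → g0 ξ = 0 := by
    intro ξ hξ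
    suffices h : Φ.φ j ‖ξ‖ = 0 by simp [hg0def, h]
    by_contra h
    rw [Φ.scaling j hj] at h
    have h4 := (Φ.supp_one _ h).2
    have hpos : (0:ℝ) < (2:ℝ) ^ ((j:ℤ) - 1) := by positivity
    have : ‖ξ‖ ≤ (2:ℝ) ^ ((j:ℤ) - 1) * 4 := by
      have := mul_le_mul_of_nonneg_left h4 hpos.le
      calc ‖ξ‖ = (2:ℝ) ^ ((j:ℤ) - 1) * ((2:ℝ) ^ (1 - (j:ℤ)) * ‖ξ‖) := by
            rw [← mul_assoc, ← zpow_add₀ (by norm_num : (2:ℝ) ≠ 0)]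
            norm_num
        _ ≤ (2:ℝ) ^ ((j:ℤ) - 1) * 4 := this
    have hR : (2:ℝ) ^ ((j:ℤ) - 1) * 4 = R := by
      rw [hRdef, show ((j:ℤ) + 1) = ((j:ℤ) - 1) + 2 by ring, zpow_add₀ (by norm_num : (2:ℝ) ≠ 0)]
      norm_num
    linarith [hR ▸ this]
  have hgsupp : HasCompactSupport g := by
    refine HasCompactSupport.intro (isCompact_closedBall (0 : Ed d) R) ?_
    intro ξ hξ
    rw [Metric.mem_closedBall, dist_zero_right] at hξ
    push_neg at hξ
    have : R < ‖-ξ‖ := by rwa [norm_neg]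
    exact hg0supp _ this
  -- integrability
  have hInt : ∀ k : ℕ, Integrable (fun v : Ed d => ‖v‖ ^ k * ‖g v‖) := by
    intro k
    refine Continuous.integrable_of_hasCompactSupport ?_ ?_
    · exact ((continuous_norm.pow k)).mul hgc.norm
    · exact HasCompactSupport.mul_left hgsupp.norm
  have hcd2 : ContDiff ℝ 2 (𝓕 g) := by
    have h := Real.contDiff_fourier (f := g) (N := 2) (fun n _ => hInt n)
    exact_mod_cast h
  have hbd : ∀ k : ℕ, (k:ℕ∞) ≤ 2 → ∃ B : ℝ, ∀ w, ‖iteratedFDeriv ℝ k (𝓕 g) w‖ ≤ B := by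
    intro k hk
    have h'f : ∀ (k' n : ℕ), (k':ℕ∞) ≤ 2 → (n:ℕ∞) ≤ 0 →
        Integrable (fun v : Ed d => ‖v‖ ^ k' * ‖iteratedFDeriv ℝ n g v‖) := by
      intro k' n _ hn
      have hn0 : n = 0 := by exact_mod_cast Nat.le_zero.1 (by exact_mod_cast hn)
      subst hn0
      simpa only [norm_iteratedFDeriv_zero] using hInt k'
    refine ⟨(2 * π) ^ k * (2 * (k:ℝ) + 2) ^ (0:ℕ) *
      ∑ p ∈ Finset.range (k + 1) ×ˢ Finset.range (0 + 1),
        ∫ v : Ed d, ‖v‖ ^ p.1 * ‖iteratedFDeriv ℝ p.2 g v‖, fun w => ?_⟩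
    have h := Real.pow_mul_norm_iteratedFDeriv_fourier_le (K := 2) (N := 0)
      (contDiff_zero.2 hgc) h'f (k := k) (n := 0) hk le_rfl w
    simpa using h
  obtain ⟨B0, hB0⟩ := hbd 0 (by norm_num)
  obtain ⟨B1, hB1⟩ := hbd 1 (by norm_num)
  obtain ⟨B2, hB2⟩ := hbd 2 (by norm_num)
  rw [hPg]
  have hdiff : Differentiable ℝ (𝓕 g) := hcd2.differentiable (by norm_num)
  have hfd1 : ∀ x, ‖fderiv ℝ (𝓕 g) x‖ ≤ B1 := by
    intro x
    have h := hB1 x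
    rwa [← norm_iteratedFDeriv_fderiv (n := 0), norm_iteratedFDeriv_zero] at h
  have hfd2 : ∀ x, ‖fderiv ℝ (fderiv ℝ (𝓕 g)) x‖ ≤ B2 := by
    intro x
    have h := hB2 x
    rwa [← norm_iteratedFDeriv_fderiv (n := 1), ← norm_iteratedFDeriv_fderiv (n := 0),
      norm_iteratedFDeriv_zero] at h
  refine ⟨B0.toNNReal, B1.toNNReal, B2.toNNReal, ?_, ?_, ?_, ?_, ?_⟩
  · intro x
    have h := hB0 x
    rw [norm_iteratedFDeriv_zero] at h
    exact h.trans (Real.le_coe_toNNReal B0)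
  · refine lipschitzWith_of_nnnorm_fderiv_le hdiff fun x => ?_
    rw [← norm_toNNReal]
    exact Real.toNNReal_mono (hfd1 x)
  · exact fun x => (hdiff x).hasFDerivAt
  · exact fun x => (hfd1 x).trans (Real.le_coe_toNNReal B1)
  · refine lipschitzWith_of_nnnorm_fderiv_le (𝕜 := ℝ) ?_ fun x => ?_
    · exact (hcd2.fderiv_right (m := 1) (by norm_num)).differentiable one_ne_zero
    · rw [← norm_toNNReal]
      exact Real.toNNReal_mono (hfd2 x)

end pproj
section sphere

variable {d : ℕ}



lemma sph_curve_lip (x : Ed d) (y : Metric.sphere (0 : Ed d) 1) :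
    LipschitzWith 1 (fun s : ℝ => x - s • (y : Ed d)) := by
  refine LipschitzWith.of_dist_le_mul fun s s' => ?_
  have h : (x - s • (y : Ed d)) - (x - s' • (y : Ed d)) = (s' - s) • (y : Ed d) := by
    rw [sub_smul]; abel
  rw [dist_eq_norm, h, norm_smul, norm_eq_of_mem_sphere y, mul_one, Real.norm_eq_abs,
    NNReal.coe_one, one_mul, dist_eq_norm, Real.norm_eq_abs, abs_sub_comm]

lemma sph_integrable {P : Ed d → ℂ} (hPc : Continuous P) {C₀ : ℝ} (hC0 : ∀ z, ‖P z‖ ≤ C₀)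
    (x : Ed d) (t : ℝ) :
    Integrable (fun y : Metric.sphere (0 : Ed d) 1 => P (x - t • (y : Ed d))) ((volume : Measure (Ed d)).toSphere) := by
  refine (integrable_const C₀).mono' ?_ ?_
  · exact (hPc.comp (by fun_prop : Continuous fun y : Metric.sphere (0 : Ed d) 1 => x - t • (y : Ed d)))
      |>.aestronglyMeasurable
  · exact Filter.Eventually.of_forall fun y => hC0 _

lemma sph_cont {P : Ed d → ℂ} (hPc : Continuous P) {C₀ : ℝ} (hC0 : ∀ z, ‖P z‖ ≤ C₀) :
    Continuous (fun q : Ed d × ℝ => sphAvg P q.1 q.2) := by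
  refine continuous_of_dominated ?_ ?_ (integrable_const C₀) ?_
  · intro q
    exact (hPc.comp (by fun_prop : Continuous fun y : Metric.sphere (0 : Ed d) 1 => q.1 - q.2 • (y : Ed d)))
      |>.aestronglyMeasurable
  · exact fun q => Filter.Eventually.of_forall fun y => hC0 _
  · refine Filter.Eventually.of_forall fun y => ?_
    exact hPc.comp (by fun_prop : Continuous fun q : Ed d × ℝ => q.1 - q.2 • (y : Ed d))

lemma sphD_cont {P' : Ed d → (Ed d →L[ℝ] ℂ)} (hc : Continuous P') {C₁ : ℝ}
    (hb : ∀ z, ‖P' z‖ ≤ C₁) :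
    Continuous (fun q : Ed d × ℝ =>
      ∫ y : Metric.sphere (0 : Ed d) 1, (P' (q.1 - q.2 • (y : Ed d))) (-(y : Ed d)) ∂((volume : Measure (Ed d)).toSphere)) := by
  refine continuous_of_dominated ?_ ?_ (integrable_const C₁) ?_
  · intro q
    refine Continuous.aestronglyMeasurable ?_
    have h1 : Continuous (fun y : Metric.sphere (0 : Ed d) 1 =>
        P' (q.1 - q.2 • (y : Ed d))) :=
      hc.comp (by fun_prop : Continuous fun y : Metric.sphere (0 : Ed d) 1 => q.1 - q.2 • (y : Ed d))
    exact h1.clm_apply continuous_subtype_val.neg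
  · refine fun q => Filter.Eventually.of_forall fun y => ?_
    calc ‖(P' (q.1 - q.2 • (y : Ed d))) (-(y : Ed d))‖
        ≤ ‖P' (q.1 - q.2 • (y : Ed d))‖ * ‖-(y : Ed d)‖ := ContinuousLinearMap.le_opNorm _ _
      _ ≤ C₁ * 1 := by
          have h2 : ‖-(y : Ed d)‖ ≤ 1 := by rw [norm_neg, norm_eq_of_mem_sphere y]
          exact mul_le_mul (hb _) h2 (norm_nonneg _)
            ((norm_nonneg (P' (q.1 - q.2 • (y : Ed d)))).trans (hb _))
      _ = C₁ := mul_one _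
  · refine Filter.Eventually.of_forall fun y => ?_
    have h1 : Continuous (fun q : Ed d × ℝ => P' (q.1 - q.2 • (y : Ed d))) :=
      hc.comp (by fun_prop : Continuous fun q : Ed d × ℝ => q.1 - q.2 • (y : Ed d))
    exact (ContinuousLinearMap.apply ℝ ℂ (-(y : Ed d))).continuous.comp h1

lemma sph_hasDerivAt {P : Ed d → ℂ} {C₀ : ℝ} (hC0 : ∀ z, ‖P z‖ ≤ C₀) {C₁ : ℝ≥0}
    (hLip : LipschitzWith C₁ P)
    (hdf : ∀ z, HasFDerivAt P (fderiv ℝ P z) z)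
    (hc' : Continuous (fderiv ℝ P)) (x : Ed d) (t : ℝ) :
    HasDerivAt (fun s => sphAvg P x s)
      (∫ y : Metric.sphere (0 : Ed d) 1,
        (fderiv ℝ P (x - t • (y : Ed d))) (-(y : Ed d)) ∂((volume : Measure (Ed d)).toSphere)) t := by
  have hPc : Continuous P := hLip.continuous
  have key := hasDerivAt_integral_of_dominated_loc_of_lip (μ := (volume : Measure (Ed d)).toSphere) (𝕜 := ℝ)
    (F := fun s (y : Metric.sphere (0 : Ed d) 1) => P (x - s • (y : Ed d)))
    (F' := fun y : Metric.sphere (0 : Ed d) 1 =>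
      (fderiv ℝ P (x - t • (y : Ed d))) (-(y : Ed d)))
    (x₀ := t) (bound := fun _ => (C₁ : ℝ)) (s := Metric.ball t 1) (Metric.ball_mem_nhds t one_pos)
    ?_ ?_ ?_ ?_ ?_ ?_
  · exact key.2
  · refine Filter.Eventually.of_forall fun s => ?_
    exact (hPc.comp (by fun_prop : Continuous fun y : Metric.sphere (0 : Ed d) 1 => x - s • (y : Ed d)))
      |>.aestronglyMeasurable
  · exact sph_integrable hPc hC0 x t
  · refine Continuous.aestronglyMeasurable ?_
    have h1 : Continuous (fun y : Metric.sphere (0 : Ed d) 1 =>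
        fderiv ℝ P (x - t • (y : Ed d))) :=
      hc'.comp (by fun_prop : Continuous fun y : Metric.sphere (0 : Ed d) 1 => x - t • (y : Ed d))
    exact h1.clm_apply continuous_subtype_val.neg
  · refine Filter.Eventually.of_forall fun y => ?_
    have h := (hLip.comp (sph_curve_lip x y)).lipschitzOnWith (s := Metric.ball t 1)
    rw [mul_one] at h
    convert h using 2
    · exact Real.nnabs_coe C₁
    · rfl
  · exact integrable_const _
  · refine Filter.Eventually.of_forall fun y => ?_
    have hcurve : HasDerivAt (fun s : ℝ => x - s • (y : Ed d)) (-(y : Ed d)) t := by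
      have h1 : HasDerivAt (fun s : ℝ => s • (y : Ed d)) ((y : Ed d)) t := by
        simpa using (hasDerivAt_id t).smul_const (y : Ed d)
      simpa using h1.const_sub x
    exact (hdf (x - t • (y : Ed d))).comp_hasDerivAt t hcurve

end sphere
section ftc

variable {d : ℕ}

lemma sph_enorm_sub_le {P : Ed d → ℂ} {C₀ : ℝ} (hC0 : ∀ z, ‖P z‖ ≤ C₀) {C₁ : ℝ≥0}
    (hLip : LipschitzWith C₁ P) (hdf : ∀ z, HasFDerivAt P (fderiv ℝ P z) z)
    (hc' : Continuous (fderiv ℝ P)) {C₁' : ℝ} (hb : ∀ z, ‖fderiv ℝ P z‖ ≤ C₁')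
    (x : Ed d) {a b : ℝ} (hab : a ≤ b) :
    (‖sphAvg P x b - sphAvg P x a‖₊ : ℝ≥0∞) ≤
      ∫⁻ s in Set.Ioc a b, (‖∫ y : Metric.sphere (0 : Ed d) 1,
        (fderiv ℝ P (x - s • (y : Ed d))) (-(y : Ed d))
          ∂((volume : Measure (Ed d)).toSphere)‖₊ : ℝ≥0∞) := by
  set Fd : ℝ → ℂ := fun s => ∫ y : Metric.sphere (0 : Ed d) 1,
    (fderiv ℝ P (x - s • (y : Ed d))) (-(y : Ed d))
      ∂((volume : Measure (Ed d)).toSphere) with hFd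
  have hcont : Continuous Fd := by
    have h := sphD_cont (d := d) hc' hb
    exact h.comp (Continuous.prodMk_right x)
  have heq : sphAvg P x b - sphAvg P x a = ∫ s in a..b, Fd s := by
    refine (intervalIntegral.integral_eq_sub_of_hasDerivAt (fun s _ => ?_)
      (hcont.intervalIntegrable a b)).symm
    exact sph_hasDerivAt hC0 hLip hdf hc' x s
  rw [heq, intervalIntegral.integral_of_le hab]
  exact enorm_integral_le_lintegral_enorm _

end ftc
section mixed

variable {d : ℕ}

lemma vol_ne_zero : (volume : Measure (Ed d)) ≠ 0 := by
  intro h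
  have h2 := isOpen_univ.measure_pos (volume : Measure (Ed d)) ⟨0, trivial⟩
  rw [h] at h2
  simp at h2

lemma cf_le_essSup {G : Ed d → ℝ≥0∞} (hG : Continuous G) (x : Ed d) :
    G x ≤ essSup G volume := by
  by_contra hcon
  push_neg at hcon
  obtain ⟨c, hc1, hc2⟩ := exists_between hcon
  have hU : IsOpen {z : Ed d | c < G z} := isOpen_Ioi.preimage hG
  have hpos : 0 < volume {z : Ed d | c < G z} := hU.measure_pos _ ⟨x, hc2⟩
  have h0 : volume {z : Ed d | ¬ G z ≤ essSup G volume} = 0 :=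
    ae_iff.mp (ENNReal.ae_le_essSup (μ := (volume : Measure (Ed d))) G)
  have hsub : {z : Ed d | c < G z} ⊆ {z : Ed d | ¬ G z ≤ essSup G volume} := by
    intro z hz
    simp only [Set.mem_setOf_eq, not_le] at *
    exact hc1.trans hz
  exact absurd (measure_mono_null hsub h0) hpos.ne'

lemma one_le_toReal {r : ℝ≥0∞} (hr : 1 ≤ r) (hrt : r ≠ ∞) : 1 ≤ r.toReal := by
  simpa using ENNReal.toReal_mono hrt hr

lemma finset_sup_continuous {α : Type*} [TopologicalSpace α] (T : Finset ℝ)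
    {v : α → ℝ → ℝ≥0∞} (hv : ∀ l, Continuous fun x => v x l) :
    Continuous fun x => T.sup (fun l => v x l) := by
  classical
  induction T using Finset.induction with
  | empty => simpa using continuous_const
  | @insert a s ha ih =>
      simp only [Finset.sup_insert]
      exact (hv a).max ih

lemma finset_sup_measurable {α : Type*} [MeasurableSpace α] (T : Finset ℝ)
    {v : α → ℝ → ℝ≥0∞} (hv : ∀ l, Measurable fun x => v x l) :
    Measurable fun x => T.sup (fun l => v x l) := by
  classical
  induction T using Finset.induction with
  | empty => simpa using measurable_const
  | @insert a s ha ih =>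
      simp only [Finset.sup_insert]
      exact (hv a).max ih

lemma lrSum_continuous {α : Type*} [TopologicalSpace α] {r : ℝ≥0∞} (T : Finset ℝ)
    {v : α → ℝ → ℝ≥0∞} (hv : ∀ l, Continuous fun x => v x l) :
    Continuous fun x => lrSum r T (v x) := by
  rcases eq_or_ne r ∞ with hrt | hrt
  · subst hrt
    simp only [lrSum, if_pos]
    exact finset_sup_continuous T hv
  · simp only [lrSum, if_neg hrt]
    refine ENNReal.continuous_rpow_const.comp ?_
    exact continuous_finset_sum T fun l _ => ENNReal.continuous_rpow_const.comp (hv l)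

lemma lrSum_measurable {α : Type*} [MeasurableSpace α] {r : ℝ≥0∞} (T : Finset ℝ)
    {v : α → ℝ → ℝ≥0∞} (hv : ∀ l, Measurable fun x => v x l) :
    Measurable fun x => lrSum r T (v x) := by
  rcases eq_or_ne r ∞ with hrt | hrt
  · subst hrt
    simp only [lrSum, if_pos]
    exact finset_sup_measurable T hv
  · simp only [lrSum, if_neg hrt]
    refine ENNReal.continuous_rpow_const.measurable.comp ?_
    exact Finset.measurable_sum T fun l _ =>
      ENNReal.continuous_rpow_const.measurable.comp (hv l)

lemma lrSum_const_mul {r : ℝ≥0∞} (hr : 1 ≤ r) (T : Finset ℝ) (c : ℝ≥0∞) (v : ℝ → ℝ≥0∞) :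
    lrSum r T (fun l => c * v l) = c * lrSum r T v := by
  rcases eq_or_ne r ∞ with hrt | hrt
  · subst hrt
    simp only [lrSum, if_pos]
    rw [Finset.sup_eq_iSup, Finset.sup_eq_iSup, ENNReal.mul_iSup]
    exact iSup_congr fun l => (ENNReal.mul_iSup _ _).symm
  · have hp : 1 ≤ r.toReal := one_le_toReal hr hrt
    have hp0 : (0:ℝ) ≤ r.toReal := by positivity
    have hpne : r.toReal ≠ 0 := by positivity
    simp only [lrSum, if_neg hrt]
    have h1 : ∀ l : ℝ, (c * v l) ^ r.toReal = c ^ r.toReal * v l ^ r.toReal := fun l =>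
      ENNReal.mul_rpow_of_nonneg _ _ hp0
    simp_rw [h1]
    rw [← Finset.mul_sum, ENNReal.mul_rpow_of_nonneg _ _ (by positivity : (0:ℝ) ≤ 1 / r.toReal),
      ← ENNReal.rpow_mul, mul_one_div_cancel hpne, ENNReal.rpow_one]

lemma lqNorm_mono {q : ℝ≥0∞} {A B : Ed d → ℝ≥0∞} (h : ∀ x, A x ≤ B x) :
    lqNorm q A ≤ lqNorm q B := by
  rcases eq_or_ne q ∞ with hq | hq
  · subst hq
    simp only [lqNorm, if_pos]
    exact essSup_mono_ae (Filter.Eventually.of_forall h)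
  · simp only [lqNorm, if_neg hq]
    refine ENNReal.rpow_le_rpow ?_ (by positivity)
    exact lintegral_mono fun x => ENNReal.rpow_le_rpow (h x) ENNReal.toReal_nonneg

lemma lqNorm_const_mul {q : ℝ≥0∞} (hq : 1 ≤ q) (c : ℝ≥0∞) (hc : c ≠ ∞) (A : Ed d → ℝ≥0∞) :
    lqNorm q (fun x => c * A x) = c * lqNorm q A := by
  rcases eq_or_ne q ∞ with hqt | hqt
  · subst hqt
    simp only [lqNorm, if_pos]
    exact ENNReal.essSup_const_mul
  · have hs : 1 ≤ q.toReal := one_le_toReal hq hqt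
    have hs0 : (0:ℝ) ≤ q.toReal := by positivity
    have hsne : q.toReal ≠ 0 := by positivity
    simp only [lqNorm, if_neg hqt]
    have h1 : ∀ x, (c * A x) ^ q.toReal = c ^ q.toReal * A x ^ q.toReal := fun x =>
      ENNReal.mul_rpow_of_nonneg _ _ hs0
    simp_rw [h1]
    rw [lintegral_const_mul' _ _ (ENNReal.rpow_ne_top_of_nonneg hs0 hc),
      ENNReal.mul_rpow_of_nonneg _ _ (by positivity : (0:ℝ) ≤ 1 / q.toReal),
      ← ENNReal.rpow_mul, mul_one_div_cancel hsne, ENNReal.rpow_one]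

lemma lqNorm_triangle {q : ℝ≥0∞} (hq : 1 ≤ q) {A B : Ed d → ℝ≥0∞}
    (hA : AEMeasurable A (volume : Measure (Ed d)))
    (hB : AEMeasurable B (volume : Measure (Ed d))) :
    lqNorm q (fun x => A x + B x) ≤ lqNorm q A + lqNorm q B := by
  rcases eq_or_ne q ∞ with hqt | hqt
  · subst hqt
    simp only [lqNorm, if_pos]
    exact ENNReal.essSup_add_le A B
  · simp only [lqNorm, if_neg hqt]
    exact ENNReal.lintegral_Lp_add_le hA hB (one_le_toReal hq hqt)

lemma lintegral_Ioc_shift (l δ' : ℝ) (g : ℝ → ℝ≥0∞) :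
    ∫⁻ s in Set.Ioc l (l + δ'), g s = ∫⁻ h in Set.Ioc 0 δ', g (l + h) := by
  rw [← lintegral_indicator measurableSet_Ioc, ← lintegral_indicator measurableSet_Ioc,
    ← lintegral_add_left_eq_self (fun s => (Set.Ioc l (l + δ')).indicator g s) l]
  congr 1
  funext h
  by_cases hh : h ∈ Set.Ioc 0 δ'
  · have hmem : l + h ∈ Set.Ioc l (l + δ') := by
      simp only [Set.mem_Ioc] at *
      constructor <;> linarith [hh.1, hh.2]
    simp [Set.indicator_of_mem hmem, Set.indicator_of_mem hh]
  · have hmem : l + h ∉ Set.Ioc l (l + δ') := by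
      simp only [Set.mem_Ioc] at *
      intro hcon
      exact hh ⟨by linarith [hcon.1], by linarith [hcon.2]⟩
    simp [Set.indicator_of_notMem hmem, Set.indicator_of_notMem hh]

end mixed
section assembly

variable {d : ℕ}

lemma mixed_assembly {q r : ℝ≥0∞} (hr : 1 ≤ r) (hrq : r ≤ q)
    {δ' : ℝ} (hδ : 0 < δ') (T : Finset ℝ) {W : Ed d → ℝ → ℝ≥0∞}
    (hW : Continuous (fun p : Ed d × ℝ => W p.1 p.2)) :
    lqNorm q (fun x => lrSum r T (fun l => ∫⁻ s in Set.Ioc l (l + δ'), W x s)) ≤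
      ENNReal.ofReal δ' *
        ⨆ h ∈ Set.Icc (0:ℝ) δ', lqNorm q (fun x => lrSum r T (fun l => W x (l + h))) := by
  classical
  set δe : ℝ≥0∞ := ENNReal.ofReal δ' with hδe
  have hδe0 : δe ≠ 0 := (ENNReal.ofReal_pos.2 hδ).ne'
  have hδet : δe ≠ ∞ := ENNReal.ofReal_ne_top
  have hvol : (volume : Measure ℝ) (Set.Ioc (0:ℝ) δ') = δe := by
    rw [Real.volume_Ioc, sub_zero]
  set M : ℝ → ℝ≥0∞ := fun h => lqNorm q (fun x => lrSum r T (fun l => W x (l + h))) with hM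
  set K : ℝ≥0∞ := ⨆ h ∈ Set.Icc (0:ℝ) δ', M h with hK
  have hMK : ∀ h ∈ Set.Icc (0:ℝ) δ', M h ≤ K := fun h hh => le_biSup _ hh
  have hWc1 : ∀ t : ℝ, Continuous fun x => W x t := fun t =>
    hW.comp (continuous_id.prodMk continuous_const)
  have hWc2 : ∀ x : Ed d, Continuous fun s => W x s := fun x =>
    hW.comp (continuous_const.prodMk continuous_id)
  have hshift : ∀ x l, ∫⁻ s in Set.Ioc l (l + δ'), W x s = ∫⁻ h in Set.Ioc 0 δ', W x (l + h) :=
    fun x l => lintegral_Ioc_shift l δ' (fun s => W x s)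
  simp_rw [hshift]
  rcases eq_or_ne r ∞ with hrT | hrT
  · -- r = ∞ forces q = ∞
    have hqT : q = ∞ := top_le_iff.1 (hrT ▸ hrq)
    subst hrT; subst hqT
    rw [lqNorm, if_pos rfl]
    have hx : ∀ x, lrSum ∞ T (fun l => ∫⁻ h in Set.Ioc 0 δ', W x (l + h)) ≤ δe * K := by
      intro x
      simp only [lrSum, if_pos]
      refine Finset.sup_le fun l hl => ?_
      have hbd : ∀ h ∈ Set.Ioc (0:ℝ) δ', W x (l + h) ≤ K := by
        intro h hh
        have h1 : W x (l + h) ≤ T.sup (fun l' => W x (l' + h)) :=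
          Finset.le_sup (f := fun l' => W x (l' + h)) hl
        have hcont : Continuous fun x' => lrSum ∞ T (fun l' => W x' (l' + h)) :=
          lrSum_continuous T fun l' => hWc1 (l' + h)
        have h2 : lrSum ∞ T (fun l' => W x (l' + h)) ≤ M h := by
          have h4 := cf_le_essSup hcont x
          have h5 : M h = essSup (fun x' => lrSum ∞ T (fun l' => W x' (l' + h))) volume :=
            if_pos rfl
          rw [h5]
          exact h4
        have h3 : T.sup (fun l' => W x (l' + h)) = lrSum ∞ T (fun l' => W x (l' + h)) := by
          simp [lrSum]
        exact h1.trans (h3 ▸ (h2.trans (hMK h ⟨hh.1.le, hh.2⟩)))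
      calc ∫⁻ h in Set.Ioc 0 δ', W x (l + h) ≤ ∫⁻ _ in Set.Ioc (0:ℝ) δ', K :=
            setLIntegral_mono measurable_const fun h hh => hbd h hh
        _ = K * δe := by rw [setLIntegral_const, hvol]
        _ = δe * K := mul_comm _ _
    haveI : NeZero (volume : Measure (Ed d)) := ⟨vol_ne_zero⟩
    exact (essSup_mono_ae (Filter.Eventually.of_forall hx)).trans
      (le_of_eq (essSup_const' _))
  · -- r ≠ ∞
    set p : ℝ := r.toReal with hpdef
    have hp : 1 ≤ p := one_le_toReal hr hrT
    have hp0 : (0:ℝ) ≤ p := by positivity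
    have hppos : (0:ℝ) < p := by positivity
    have hpne : p ≠ 0 := by positivity
    set S : Ed d → ℝ → ℝ≥0∞ := fun x h => ∑ l ∈ T, W x (l + h) ^ p with hS
    have hShm : ∀ x, Measurable fun h => S x h := by
      intro x
      exact Finset.measurable_sum T fun l _ =>
        ENNReal.continuous_rpow_const.measurable.comp
          ((hWc2 x).comp (continuous_const.add continuous_id)).measurable
    have hJen : ∀ x, ∑ l ∈ T, (∫⁻ h in Set.Ioc 0 δ', W x (l + h)) ^ p ≤
        δe ^ (p - 1) * ∫⁻ h in Set.Ioc 0 δ', S x h := by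
      intro x
      have h1 : ∀ l ∈ T, (∫⁻ h in Set.Ioc 0 δ', W x (l + h)) ^ p ≤
          δe ^ (p - 1) * ∫⁻ h in Set.Ioc 0 δ', W x (l + h) ^ p := by
        intro l _
        have h2 := aux_jensen_rpow ((volume : Measure ℝ).restrict (Set.Ioc 0 δ'))
          (fun h => W x (l + h))
          ((hWc2 x).comp (continuous_const.add continuous_id)).measurable.aemeasurable hp
        rwa [Measure.restrict_apply_univ, hvol] at h2
      calc ∑ l ∈ T, (∫⁻ h in Set.Ioc 0 δ', W x (l + h)) ^ p
          ≤ ∑ l ∈ T, δe ^ (p - 1) * ∫⁻ h in Set.Ioc 0 δ', W x (l + h) ^ p :=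
            Finset.sum_le_sum h1
        _ = δe ^ (p - 1) * ∑ l ∈ T, ∫⁻ h in Set.Ioc 0 δ', W x (l + h) ^ p :=
            (Finset.mul_sum _ _ _).symm
        _ = δe ^ (p - 1) * ∫⁻ h in Set.Ioc 0 δ', S x h := by
            rw [← lintegral_finset_sum]
            intro l _
            exact ENNReal.continuous_rpow_const.measurable.comp
              ((hWc2 x).comp (continuous_const.add continuous_id)).measurable
    rcases eq_or_ne q ∞ with hqT | hqT
    · -- q = ∞
      subst hqT
      rw [lqNorm, if_pos rfl]
      have hx : ∀ x, lrSum r T (fun l => ∫⁻ h in Set.Ioc 0 δ', W x (l + h)) ≤ δe * K := by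
        intro x
        simp only [lrSum, if_neg hrT]
        have hbd : ∀ h ∈ Set.Ioc (0:ℝ) δ', S x h ≤ K ^ p := by
          intro h hh
          have hcont : Continuous fun x' => lrSum r T (fun l' => W x' (l' + h)) :=
            lrSum_continuous T fun l' => hWc1 (l' + h)
          have h2 : lrSum r T (fun l' => W x (l' + h)) ≤ M h := by
            have h4 := cf_le_essSup hcont x
            have h5 : M h = essSup (fun x' => lrSum r T (fun l' => W x' (l' + h))) volume :=
              if_pos rfl
            rw [h5]
            exact h4
          have h3 : S x h = (lrSum r T (fun l' => W x (l' + h))) ^ p := by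
            simp only [lrSum, if_neg hrT]
            rw [← ENNReal.rpow_mul, one_div_mul_cancel hpne, ENNReal.rpow_one]
          rw [h3]
          exact ENNReal.rpow_le_rpow (h2.trans (hMK h ⟨hh.1.le, hh.2⟩)) hp0
        calc (∑ l ∈ T, (∫⁻ h in Set.Ioc 0 δ', W x (l + h)) ^ p) ^ (1/p)
            ≤ (δe ^ (p - 1) * ∫⁻ h in Set.Ioc 0 δ', S x h) ^ (1/p) :=
              ENNReal.rpow_le_rpow (hJen x) (by positivity)
          _ ≤ (δe ^ (p - 1) * (K ^ p * δe)) ^ (1/p) := by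
              refine ENNReal.rpow_le_rpow (mul_le_mul_right ?_ _) (by positivity)
              calc ∫⁻ h in Set.Ioc 0 δ', S x h ≤ ∫⁻ _ in Set.Ioc (0:ℝ) δ', K ^ p :=
                    setLIntegral_mono measurable_const fun h hh => hbd h hh
                _ = K ^ p * δe := by rw [setLIntegral_const, hvol]
          _ = δe * K := by
              rw [show δe ^ (p - 1) * (K ^ p * δe) = (δe ^ (p-1) * δe ^ (1:ℝ)) * K ^ p by
                  rw [ENNReal.rpow_one]; ring,
                ← ENNReal.rpow_add _ _ hδe0 hδet, sub_add_cancel,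
                ← ENNReal.mul_rpow_of_nonneg _ _ hp0, ← ENNReal.rpow_mul,
                mul_one_div_cancel hpne, ENNReal.rpow_one]
      haveI : NeZero (volume : Measure (Ed d)) := ⟨vol_ne_zero⟩
      exact (essSup_mono_ae (Filter.Eventually.of_forall hx)).trans
        (le_of_eq (essSup_const' _))
    · -- q ≠ ∞
      set s : ℝ := q.toReal with hsdef
      have hs1 : 1 ≤ s := one_le_toReal (hr.trans hrq) hqT
      have hs0 : (0:ℝ) ≤ s := by positivity
      have hsne : s ≠ 0 := by positivity
      have hps : p ≤ s := ENNReal.toReal_mono hqT hrq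
      have hsp1 : 1 ≤ s / p := (one_le_div hppos).2 hps
      have hsp0 : (0:ℝ) ≤ s / p := by positivity
      rw [lqNorm, if_neg hqT]
      suffices hss : ∫⁻ x, (lrSum r T (fun l => ∫⁻ h in Set.Ioc 0 δ', W x (l + h))) ^ s
          ≤ (δe * K) ^ s by
        calc (∫⁻ x, (lrSum r T (fun l => ∫⁻ h in Set.Ioc 0 δ', W x (l + h))) ^ s) ^ (1/s)
            ≤ ((δe * K) ^ s) ^ (1/s) := ENNReal.rpow_le_rpow hss (by positivity)
          _ = δe * K := by
              rw [← ENNReal.rpow_mul, mul_one_div_cancel hsne, ENNReal.rpow_one]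
      have hSjm : Measurable (fun z : Ed d × ℝ => (S z.1 z.2) ^ (s/p)) := by
        refine ENNReal.continuous_rpow_const.measurable.comp ?_
        exact Finset.measurable_sum T fun l _ =>
          ENNReal.continuous_rpow_const.measurable.comp
            (hW.measurable.comp (measurable_fst.prodMk (measurable_const.add measurable_snd)))
      have hMs : ∀ h, ∫⁻ x, (S x h) ^ (s/p) = M h ^ s := by
        intro h
        have h5 : M h = (∫⁻ x, (lrSum r T fun l => W x (l + h)) ^ q.toReal) ^ (1 / q.toReal) :=
          if_neg hqT
        rw [h5, ← ENNReal.rpow_mul, one_div_mul_cancel hsne, ENNReal.rpow_one]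
        refine lintegral_congr fun x => ?_
        simp only [lrSum, if_neg hrT]
        rw [← ENNReal.rpow_mul, one_div_mul_eq_div]
      calc ∫⁻ x, (lrSum r T (fun l => ∫⁻ h in Set.Ioc 0 δ', W x (l + h))) ^ s
          = ∫⁻ x, (∑ l ∈ T, (∫⁻ h in Set.Ioc 0 δ', W x (l + h)) ^ p) ^ (s/p) := by
            refine lintegral_congr fun x => ?_
            simp only [lrSum, if_neg hrT]
            rw [← ENNReal.rpow_mul, one_div_mul_eq_div]
        _ ≤ ∫⁻ x, (δe ^ (p-1) * ∫⁻ h in Set.Ioc 0 δ', S x h) ^ (s/p) :=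
            lintegral_mono fun x => ENNReal.rpow_le_rpow (hJen x) hsp0
        _ = ∫⁻ x, δe ^ ((p-1)*(s/p)) * (∫⁻ h in Set.Ioc 0 δ', S x h) ^ (s/p) := by
            refine lintegral_congr fun x => ?_
            rw [ENNReal.mul_rpow_of_nonneg _ _ hsp0, ← ENNReal.rpow_mul]
        _ ≤ ∫⁻ x, δe ^ ((p-1)*(s/p)) *
              (δe ^ (s/p - 1) * ∫⁻ h in Set.Ioc 0 δ', (S x h) ^ (s/p)) := by
            refine lintegral_mono fun x => mul_le_mul_right ?_ _
            have h2 := aux_jensen_rpow ((volume : Measure ℝ).restrict (Set.Ioc 0 δ'))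
              (fun h => S x h) (hShm x).aemeasurable hsp1
            rwa [Measure.restrict_apply_univ, hvol] at h2
        _ = δe ^ ((p-1)*(s/p)) * (δe ^ (s/p - 1) *
              ∫⁻ x, ∫⁻ h in Set.Ioc 0 δ', (S x h) ^ (s/p)) := by
            rw [lintegral_const_mul' _ _
              (ENNReal.rpow_ne_top_of_nonneg (mul_nonneg (by linarith) hsp0) hδet)]
            congr 1
            rw [lintegral_const_mul' _ _
              (ENNReal.rpow_ne_top_of_nonneg (by linarith [hsp1]) hδet)]
        _ = δe ^ ((p-1)*(s/p)) * (δe ^ (s/p - 1) *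
              ∫⁻ h in Set.Ioc 0 δ', ∫⁻ x, (S x h) ^ (s/p)) := by
            rw [lintegral_lintegral_swap hSjm.aemeasurable]
        _ ≤ δe ^ ((p-1)*(s/p)) * (δe ^ (s/p - 1) * (K ^ s * δe)) := by
            refine mul_le_mul_right (mul_le_mul_right ?_ _) _
            calc ∫⁻ h in Set.Ioc 0 δ', ∫⁻ x, (S x h) ^ (s/p)
                ≤ ∫⁻ _ in Set.Ioc (0:ℝ) δ', K ^ s := by
                  refine setLIntegral_mono measurable_const fun h hh => ?_
                  rw [hMs h]
                  exact ENNReal.rpow_le_rpow (hMK h ⟨hh.1.le, hh.2⟩) hs0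
              _ = K ^ s * δe := by rw [setLIntegral_const, hvol]
        _ = (δe * K) ^ s := by
            have hexp : (p-1)*(s/p) + ((s/p - 1) + 1) = s := by
              rw [sub_add_cancel]
              field_simp
              ring
            rw [show δe ^ ((p-1)*(s/p)) * (δe ^ (s/p - 1) * (K ^ s * δe)) =
                (δe ^ ((p-1)*(s/p)) * (δe ^ (s/p-1) * δe ^ (1:ℝ))) * K ^ s by
                rw [ENNReal.rpow_one]; ring,
              ← ENNReal.rpow_add _ _ hδe0 hδet, ← ENNReal.rpow_add _ _ hδe0 hδet, hexp,
              ← ENNReal.mul_rpow_of_nonneg _ _ hs0]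

end assembly
section key

lemma key_var_bound {δ : ℝ} (hδ : 0 < δ) {E : Set ℝ} {T : Finset ℝ}
    (hcov : E ⊆ ⋃ l ∈ T, Set.Icc l (l + δ)) {r : ℝ≥0∞} (hr : 1 ≤ r)
    {F F' : ℝ → ℂ}
    (hFle : ∀ a b : ℝ, a ≤ b →
      (‖F b - F a‖₊ : ℝ≥0∞) ≤ ∫⁻ s in Set.Ioc a b, (‖F' s‖₊ : ℝ≥0∞)) :
    Vvar r E F ≤ 12 * (lrSum r T (fun l => (‖F l‖₊ : ℝ≥0∞)) +
      lrSum r T (fun l => ∫⁻ s in Set.Ioc l (l + δ), (‖F' s‖₊ : ℝ≥0∞))) := by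
  classical
  set G : ℝ → ℝ≥0∞ := fun l => (‖F l‖₊ : ℝ≥0∞) with hG
  set D : ℝ → ℝ≥0∞ := fun l => ∫⁻ s in Set.Ioc l (l + δ), (‖F' s‖₊ : ℝ≥0∞) with hD
  rw [Vvar]
  refine iSup_le fun N => iSup_le fun u => iSup_le fun hu => iSup_le fun hmem => ?_
  -- the choice of left endpoints
  have hSne : ∀ i : Fin (N + 1), (T.filter (fun a => a ≤ u i ∧ u i ≤ a + δ)).Nonempty := by
    intro i
    have h := hcov (hmem i)
    simp only [Set.mem_iUnion, Set.mem_Icc, exists_prop] at h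
    obtain ⟨a, haT, ha1, ha2⟩ := h
    exact ⟨a, Finset.mem_filter.2 ⟨haT, ha1, ha2⟩⟩
  set c : Fin (N + 1) → ℝ := fun i => (T.filter (fun a => a ≤ u i ∧ u i ≤ a + δ)).max' (hSne i)
    with hc
  have hcmem : ∀ i, c i ∈ T.filter (fun a => a ≤ u i ∧ u i ≤ a + δ) :=
    fun i => Finset.max'_mem _ _
  have hcT : ∀ i, c i ∈ T := fun i => (Finset.mem_filter.1 (hcmem i)).1
  have hcle : ∀ i, c i ≤ u i := fun i => (Finset.mem_filter.1 (hcmem i)).2.1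
  have hcge : ∀ i, u i ≤ c i + δ := fun i => (Finset.mem_filter.1 (hcmem i)).2.2
  have hmono : ∀ i i' : Fin (N + 1), i ≤ i' → c i ≤ c i' := by
    intro i i' hii
    have hui : u i ≤ u i' := hu.monotone hii
    by_cases hca : u i' ≤ c i + δ
    · exact Finset.le_max' _ _ (Finset.mem_filter.2 ⟨hcT i, (hcle i).trans hui, hca⟩)
    · push_neg at hca
      have := hcge i'
      linarith
  have hDbound : ∀ i : Fin (N + 1), (‖F (u i) - F (c i)‖₊ : ℝ≥0∞) ≤ D (c i) := by
    intro i
    refine (hFle (c i) (u i) (hcle i)).trans ?_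
    exact lintegral_mono_set (Set.Ioc_subset_Ioc le_rfl (hcge i))
  have htri : ∀ i : Fin N, (‖F (u i.succ) - F (u i.castSucc)‖₊ : ℝ≥0∞) ≤
      D (c i.succ) + G (c i.succ) + G (c i.castSucc) + D (c i.castSucc) := by
    intro i
    have heq : F (u i.succ) - F (u i.castSucc) =
        (F (u i.succ) - F (c i.succ)) + F (c i.succ) - F (c i.castSucc)
          - (F (u i.castSucc) - F (c i.castSucc)) := by ring
    calc (‖F (u i.succ) - F (u i.castSucc)‖₊ : ℝ≥0∞)
        ≤ (‖F (u i.succ) - F (c i.succ)‖₊ : ℝ≥0∞) + ‖F (c i.succ)‖₊ + ‖F (c i.castSucc)‖₊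
            + ‖F (u i.castSucc) - F (c i.castSucc)‖₊ := by
          rw [heq]
          have h1 : ‖F (u i.succ) - F (c i.succ) + F (c i.succ) - F (c i.castSucc)
              - (F (u i.castSucc) - F (c i.castSucc))‖₊ ≤
              ‖F (u i.succ) - F (c i.succ)‖₊ + ‖F (c i.succ)‖₊ + ‖F (c i.castSucc)‖₊
                + ‖F (u i.castSucc) - F (c i.castSucc)‖₊ := by
            refine (nnnorm_sub_le _ _).trans (add_le_add ?_ le_rfl)
            refine (nnnorm_sub_le _ _).trans (add_le_add ?_ le_rfl)
            exact nnnorm_add_le _ _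
          exact_mod_cast h1
      _ ≤ D (c i.succ) + G (c i.succ) + G (c i.castSucc) + D (c i.castSucc) := by
          exact add_le_add (add_le_add (add_le_add (hDbound i.succ) le_rfl) le_rfl)
            (hDbound i.castSucc)
  by_cases hrT : r = ∞
  · subst hrT
    rw [if_pos rfl]
    have hlr : ∀ v : ℝ → ℝ≥0∞, lrSum ∞ T v = T.sup v := fun v => by simp [lrSum]
    rw [hlr, hlr]
    refine iSup_le fun i => ?_
    refine (htri i).trans ?_
    calc D (c i.succ) + G (c i.succ) + G (c i.castSucc) + D (c i.castSucc)
        ≤ T.sup D + T.sup G + T.sup G + T.sup D :=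
          add_le_add (add_le_add (add_le_add (Finset.le_sup (hcT _)) (Finset.le_sup (hcT _)))
            (Finset.le_sup (hcT _))) (Finset.le_sup (hcT _))
      _ = 2 * (T.sup G + T.sup D) := by ring
      _ ≤ 12 * (T.sup G + T.sup D) := mul_le_mul_left (by norm_num) _
  · rw [if_neg hrT]
    have hlr : ∀ v : ℝ → ℝ≥0∞, lrSum r T v = (∑ t ∈ T, v t ^ r.toReal) ^ (1 / r.toReal) :=
      fun v => by simp [lrSum, hrT]
    rw [hlr, hlr]
    set p : ℝ := r.toReal with hpdef
    have hp : 1 ≤ p := by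
      have := ENNReal.toReal_mono hrT hr
      simpa using this
    have hp0 : (0:ℝ) ≤ p := by positivity
    have hpne : p ≠ 0 := by positivity
    have hip : (0:ℝ) ≤ 1 / p := by positivity
    have hip1 : 1 / p ≤ 1 := by rw [div_le_one (by positivity)]; exact hp
    set e : Fin N → ℝ≥0∞ := fun i => (‖F (u i.succ) - F (u i.castSucc)‖₊ : ℝ≥0∞) with he
    set Z : ℝ≥0∞ := ∑ a ∈ T, G a ^ p + ∑ a ∈ T, D a ^ p with hZ
    have hmain : ∑ i : Fin N, e i ^ p ≤ 3 * 4 ^ p * Z := by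
      rw [← Finset.sum_filter_add_sum_filter_not Finset.univ
        (fun i : Fin N => c i.castSucc = c i.succ) (fun i => e i ^ p)]
      set S1 := Finset.univ.filter (fun i : Fin N => c i.castSucc = c i.succ) with hS1
      set S2 := Finset.univ.filter (fun i : Fin N => ¬ c i.castSucc = c i.succ) with hS2
      have part1 : ∑ i ∈ S1, e i ^ p ≤ ∑ a ∈ T, D a ^ p := by
        rw [← Finset.sum_fiberwise_of_maps_to (g := fun i => c i.castSucc)
          (fun i _ => hcT i.castSucc) (fun i => e i ^ p)]
        refine Finset.sum_le_sum fun a _ => ?_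
        set fib := S1.filter (fun i => c i.castSucc = a) with hfib
        have hmem' : ∀ i ∈ fib, c i.castSucc = a ∧ c i.succ = a := by
          intro i hi
          rcases Finset.mem_filter.1 hi with ⟨hi1, hi2⟩
          rcases Finset.mem_filter.1 hi1 with ⟨-, hi3⟩
          exact ⟨hi2, hi3 ▸ hi2⟩
        have hsub : ∀ i ∈ fib, Set.Ioc (u i.castSucc) (u i.succ) ⊆ Set.Ioc a (a + δ) := by
          intro i hi
          obtain ⟨h1, h2⟩ := hmem' i hi
          refine Set.Ioc_subset_Ioc ?_ ?_
          · rw [← h1]; exact hcle i.castSucc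
          · calc u i.succ ≤ c i.succ + δ := hcge i.succ
              _ = a + δ := by rw [h2]
        have hdisj : (↑fib : Set (Fin N)).PairwiseDisjoint
            (fun i => Set.Ioc (u i.castSucc) (u i.succ)) := by
          intro i _ i' _ hne
          rcases lt_or_gt_of_ne hne with hlt | hlt
          · refine Set.Ioc_disjoint_Ioc.2 ?_
            have : u i.succ ≤ u i'.castSucc := hu.monotone (Fin.succ_le_castSucc_iff.2 hlt)
            exact le_trans (min_le_left _ _) (le_trans this (le_max_right _ _))
          · refine Set.Ioc_disjoint_Ioc.2 ?_
            have : u i'.succ ≤ u i.castSucc := hu.monotone (Fin.succ_le_castSucc_iff.2 hlt)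
            exact le_trans (min_le_right _ _) (le_trans this (le_max_left _ _))
        calc ∑ i ∈ fib, e i ^ p ≤ (∑ i ∈ fib, e i) ^ p := aux_sum_rpow_le _ _ hp
          _ ≤ D a ^ p := by
              refine ENNReal.rpow_le_rpow ?_ hp0
              calc ∑ i ∈ fib, e i
                  ≤ ∑ i ∈ fib, ∫⁻ s in Set.Ioc (u i.castSucc) (u i.succ), (‖F' s‖₊ : ℝ≥0∞) :=
                    Finset.sum_le_sum fun i _ => hFle _ _ (hu (Fin.castSucc_lt_succ (i := i))).le
                _ = ∫⁻ s in ⋃ i ∈ fib, Set.Ioc (u i.castSucc) (u i.succ), (‖F' s‖₊ : ℝ≥0∞) :=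
                    (lintegral_biUnion_finset hdisj (fun b _ => measurableSet_Ioc) _).symm
                _ ≤ D a := lintegral_mono_set (Set.iUnion₂_subset hsub)
      have hsumsucc : ∀ h : ℝ → ℝ≥0∞, ∑ i ∈ S2, h (c i.succ) ≤ ∑ a ∈ T, h a := by
        intro h
        have hinj : ∀ x ∈ S2, ∀ y ∈ S2, c x.succ = c y.succ → x = y := by
          intro x hx y hy hxy
          by_contra hne
          rcases lt_or_gt_of_ne hne with hlt | hlt
          · have h1 : c x.succ ≤ c y.castSucc := hmono _ _ (Fin.succ_le_castSucc_iff.2 hlt)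
            have h2 : c y.castSucc ≠ c y.succ := (Finset.mem_filter.1 hy).2
            have h3 : c y.castSucc ≤ c y.succ := hmono _ _ (Fin.castSucc_lt_succ (i := y)).le
            have : c y.succ ≤ c y.castSucc := hxy ▸ h1
            exact h2 (le_antisymm h3 this)
          · have h1 : c y.succ ≤ c x.castSucc := hmono _ _ (Fin.succ_le_castSucc_iff.2 hlt)
            have h2 : c x.castSucc ≠ c x.succ := (Finset.mem_filter.1 hx).2
            have h3 : c x.castSucc ≤ c x.succ := hmono _ _ (Fin.castSucc_lt_succ (i := x)).le
            have : c x.succ ≤ c x.castSucc := hxy ▸ h1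
            exact h2 (le_antisymm h3 this)
        calc ∑ i ∈ S2, h (c i.succ)
            = ∑ a ∈ S2.image (fun i => c i.succ), h a := (Finset.sum_image hinj).symm
          _ ≤ ∑ a ∈ T, h a := by
              refine Finset.sum_le_sum_of_subset ?_
              intro a ha
              obtain ⟨i, _, rfl⟩ := Finset.mem_image.1 ha
              exact hcT _
      have hsumcast : ∀ h : ℝ → ℝ≥0∞, ∑ i ∈ S2, h (c i.castSucc) ≤ ∑ a ∈ T, h a := by
        intro h
        have hinj : ∀ x ∈ S2, ∀ y ∈ S2, c x.castSucc = c y.castSucc → x = y := by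
          intro x hx y hy hxy
          by_contra hne
          rcases lt_or_gt_of_ne hne with hlt | hlt
          · have h1 : c x.succ ≤ c y.castSucc := hmono _ _ (Fin.succ_le_castSucc_iff.2 hlt)
            have h2 : c x.castSucc ≠ c x.succ := (Finset.mem_filter.1 hx).2
            have h3 : c x.castSucc ≤ c x.succ := hmono _ _ (Fin.castSucc_lt_succ (i := x)).le
            have : c x.succ ≤ c x.castSucc := hxy ▸ h1
            exact h2 (le_antisymm h3 this)
          · have h1 : c y.succ ≤ c x.castSucc := hmono _ _ (Fin.succ_le_castSucc_iff.2 hlt)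
            have h2 : c y.castSucc ≠ c y.succ := (Finset.mem_filter.1 hy).2
            have h3 : c y.castSucc ≤ c y.succ := hmono _ _ (Fin.castSucc_lt_succ (i := y)).le
            have : c y.succ ≤ c y.castSucc := hxy.symm ▸ h1
            exact h2 (le_antisymm h3 this)
        calc ∑ i ∈ S2, h (c i.castSucc)
            = ∑ a ∈ S2.image (fun i => c i.castSucc), h a := (Finset.sum_image hinj).symm
          _ ≤ ∑ a ∈ T, h a := by
              refine Finset.sum_le_sum_of_subset ?_
              intro a ha
              obtain ⟨i, _, rfl⟩ := Finset.mem_image.1 ha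
              exact hcT _
      have part2 : ∑ i ∈ S2, e i ^ p ≤ 4 ^ p * (Z + Z) := by
        calc ∑ i ∈ S2, e i ^ p
            ≤ ∑ i ∈ S2, 4 ^ p * (D (c i.succ) ^ p + G (c i.succ) ^ p + G (c i.castSucc) ^ p
                + D (c i.castSucc) ^ p) := by
              refine Finset.sum_le_sum fun i _ => ?_
              exact (ENNReal.rpow_le_rpow (htri i) hp0).trans (aux_add4_rpow_le hp _ _ _ _)
          _ = 4 ^ p * (∑ i ∈ S2, D (c i.succ) ^ p + ∑ i ∈ S2, G (c i.succ) ^ p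
                + ∑ i ∈ S2, G (c i.castSucc) ^ p + ∑ i ∈ S2, D (c i.castSucc) ^ p) := by
              rw [← Finset.mul_sum]
              congr 1
              rw [← Finset.sum_add_distrib, ← Finset.sum_add_distrib, ← Finset.sum_add_distrib]
          _ ≤ 4 ^ p * (∑ a ∈ T, D a ^ p + ∑ a ∈ T, G a ^ p + ∑ a ∈ T, G a ^ p
                + ∑ a ∈ T, D a ^ p) := by
              refine mul_le_mul_right ?_ _
              exact add_le_add (add_le_add (add_le_add (hsumsucc _) (hsumsucc _))
                (hsumcast _)) (hsumcast _)
          _ = 4 ^ p * (Z + Z) := by rw [hZ]; ring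
      have h4p : (1:ℝ≥0∞) ≤ 4 ^ p := by
        calc (1:ℝ≥0∞) = 1 ^ p := (ENNReal.one_rpow p).symm
          _ ≤ 4 ^ p := ENNReal.rpow_le_rpow (by norm_num) hp0
      calc ∑ i ∈ S1, e i ^ p + ∑ i ∈ S2, e i ^ p
          ≤ ∑ a ∈ T, D a ^ p + 4 ^ p * (Z + Z) := add_le_add part1 part2
        _ ≤ 1 * Z + 4 ^ p * (Z + Z) := by
            refine add_le_add ?_ le_rfl
            rw [one_mul, hZ]
            exact le_add_self
        _ ≤ 4 ^ p * Z + 4 ^ p * (Z + Z) := add_le_add (mul_le_mul_left h4p _) le_rfl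
        _ = 3 * 4 ^ p * Z := by ring
    calc (∑ i : Fin N, e i ^ p) ^ (1 / p)
        ≤ (3 * 4 ^ p * Z) ^ (1 / p) := ENNReal.rpow_le_rpow hmain hip
      _ = 3 ^ (1/p) * (4 ^ p) ^ (1/p) * Z ^ (1/p) := by
          rw [ENNReal.mul_rpow_of_nonneg _ _ hip, ENNReal.mul_rpow_of_nonneg _ _ hip]
      _ = 3 ^ (1/p) * 4 * Z ^ (1/p) := by
          rw [← ENNReal.rpow_mul, mul_one_div_cancel hpne, ENNReal.rpow_one]
      _ ≤ 3 * 4 * ((∑ a ∈ T, G a ^ p) ^ (1/p) + (∑ a ∈ T, D a ^ p) ^ (1/p)) := by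
          refine mul_le_mul' (mul_le_mul_left ?_ _) ?_
          · calc (3:ℝ≥0∞) ^ (1/p) ≤ 3 ^ (1:ℝ) :=
                ENNReal.rpow_le_rpow_of_exponent_le (by norm_num) hip1
              _ = 3 := ENNReal.rpow_one 3
          · exact ENNReal.rpow_add_le_add_rpow _ _ hip hip1
      _ = 12 * ((∑ a ∈ T, G a ^ p) ^ (1/p) + (∑ a ∈ T, D a ^ p) ^ (1/p)) := by norm_num

end key
/-- **The embedding theorem.**  For `1 ≤ r ≤ q ≤ ∞`,
`‖V^r_E (𝒜_j f)‖_{L^q} ≲ ‖𝒜_j f(x,t_ν)‖_{L^q(ℓ^r)} +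
  sup_{h ∈ [0,2^{-j}]} ‖2^{-j} ∂_t 𝒜_j f(x, t_ν + h)‖_{L^q(ℓ^r)}`,
with a constant independent of `j` and `f`. -/
theorem statement3 (d : ℕ) (hd : 2 ≤ d) (Φ : LPFamily) (E : Set ℝ)
    (hE : E ⊆ Set.Icc (1:ℝ) 2) (q r : ℝ≥0∞) (hr : 1 ≤ r) (hrq : r ≤ q) :
    ∃ C : ℝ≥0, ∀ j : ℕ, 1 ≤ j → ∀ T : Finset ℝ, IsMinCover E ((2:ℝ) ^ (-(j:ℤ))) T →
      ∀ f : SchwartzMap (Ed d) ℂ,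
        lqNorm q (fun x => Vvar r E (fun t => Aj Φ j (⇑f) x t)) ≤
          C * (mixedNorm q r T (fun x t => Aj Φ j (⇑f) x t) +
            ⨆ h ∈ Set.Icc (0:ℝ) ((2:ℝ) ^ (-(j:ℤ))),
              mixedNorm q r T (fun x t =>
                (2:ℂ) ^ (-(j:ℤ)) * deriv (fun s => Aj Φ j (⇑f) x s) (t + h))) := by
  classical
  have hq : 1 ≤ q := hr.trans hrq
  refine ⟨12, ?_⟩
  intro j hj T hT f
  set δ : ℝ := (2:ℝ) ^ (-(j:ℤ)) with hδdef
  have hδ : 0 < δ := by positivity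
  set δe : ℝ≥0∞ := ENNReal.ofReal δ with hδedef
  have hδet : δe ≠ ∞ := ENNReal.ofReal_ne_top
  obtain ⟨C₀, C₁, C₂, hC0, hLip, hfd, hC1, hLip'⟩ := pproj_bounds Φ hj f
  set P : Ed d → ℂ := Pproj Φ j (⇑f) with hPdef
  have hc' : Continuous (fderiv ℝ P) := hLip'.continuous
  set Fd : Ed d → ℝ → ℂ := fun x t => ∫ y : Metric.sphere (0 : Ed d) 1,
    (fderiv ℝ P (x - t • (y : Ed d))) (-(y : Ed d))
      ∂((volume : Measure (Ed d)).toSphere) with hFddef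
  have hFdcont : Continuous (fun z : Ed d × ℝ => Fd z.1 z.2) := sphD_cont hc' hC1
  have hder : ∀ (x : Ed d) (t : ℝ), HasDerivAt (fun s => Aj Φ j (⇑f) x s) (Fd x t) t :=
    fun x t => sph_hasDerivAt hC0 hLip hfd hc' x t
  have hderiveq : ∀ (x : Ed d) (t : ℝ), deriv (fun s => Aj Φ j (⇑f) x s) t = Fd x t :=
    fun x t => (hder x t).deriv
  have hFTC : ∀ (x : Ed d) (a b : ℝ), a ≤ b →
      (‖Aj Φ j (⇑f) x b - Aj Φ j (⇑f) x a‖₊ : ℝ≥0∞) ≤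
        ∫⁻ s in Set.Ioc a b, (‖Fd x s‖₊ : ℝ≥0∞) :=
    fun x a b hab => sph_enorm_sub_le hC0 hLip hfd hc' hC1 x hab
  set W : Ed d → ℝ → ℝ≥0∞ := fun x t => (‖Fd x t‖₊ : ℝ≥0∞) with hWdef
  have hWcont : Continuous (fun z : Ed d × ℝ => W z.1 z.2) :=
    ENNReal.continuous_coe.comp hFdcont.nnnorm
  have hAcont : Continuous (fun z : Ed d × ℝ => Aj Φ j (⇑f) z.1 z.2) :=
    sph_cont hLip.continuous hC0
  set lrA : Ed d → ℝ≥0∞ := fun x => lrSum r T (fun l => (‖Aj Φ j (⇑f) x l‖₊ : ℝ≥0∞))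
    with hlrA
  set lrD : Ed d → ℝ≥0∞ := fun x => lrSum r T (fun l => ∫⁻ s in Set.Ioc l (l + δ), W x s)
    with hlrD
  -- pointwise variation bound
  have hpt : ∀ x, Vvar r E (fun t => Aj Φ j (⇑f) x t) ≤ 12 * (lrA x + lrD x) := by
    intro x
    exact key_var_bound hδ hT.1 hr (fun a b hab => hFTC x a b hab)
  -- measurability
  have hlrAm : AEMeasurable lrA (volume : Measure (Ed d)) := by
    refine Continuous.aemeasurable ?_
    refine lrSum_continuous T fun l => ?_
    exact ENNReal.continuous_coe.comp
      ((hAcont.comp (continuous_id.prodMk continuous_const)).nnnorm)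
  have hlrDm : AEMeasurable lrD (volume : Measure (Ed d)) := by
    refine Measurable.aemeasurable ?_
    refine lrSum_measurable T fun l => ?_
    exact Measurable.lintegral_prod_right' (f := fun z : Ed d × ℝ => W z.1 z.2)
      hWcont.measurable
  -- scalar identity
  have hscal : ∀ z : ℂ, (‖(2:ℂ) ^ (-(j:ℤ)) * z‖₊ : ℝ≥0∞) = δe * (‖z‖₊ : ℝ≥0∞) := by
    intro z
    have h1 : ‖(2:ℂ) ^ (-(j:ℤ))‖ = δ := by
      rw [norm_zpow, hδdef, Complex.norm_ofNat]
    rw [nnnorm_mul, ENNReal.coe_mul, hδedef, ← h1, ofReal_norm, enorm_eq_nnnorm]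
  -- identification of the sup term
  have hsup : ⨆ h ∈ Set.Icc (0:ℝ) δ,
      mixedNorm q r T (fun x t =>
        (2:ℂ) ^ (-(j:ℤ)) * deriv (fun s => Aj Φ j (⇑f) x s) (t + h)) =
      δe * ⨆ h ∈ Set.Icc (0:ℝ) δ,
        lqNorm q (fun x => lrSum r T (fun l => W x (l + h))) := by
    rw [ENNReal.mul_iSup]
    refine iSup_congr fun h => ?_
    rw [ENNReal.mul_iSup]
    refine iSup_congr fun hh => ?_
    have h1 : mixedNorm q r T (fun x t =>
        (2:ℂ) ^ (-(j:ℤ)) * deriv (fun s => Aj Φ j (⇑f) x s) (t + h)) =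
        lqNorm q (fun x => lrSum r T (fun l =>
          (‖(2:ℂ) ^ (-(j:ℤ)) * deriv (fun s => Aj Φ j (⇑f) x s) (l + h)‖₊ : ℝ≥0∞))) := rfl
    rw [h1]
    have h2 : ∀ x, lrSum r T (fun l =>
        (‖(2:ℂ) ^ (-(j:ℤ)) * deriv (fun s => Aj Φ j (⇑f) x s) (l + h)‖₊ : ℝ≥0∞)) =
        δe * lrSum r T (fun l => W x (l + h)) := by
      intro x
      rw [← lrSum_const_mul hr]
      congr 1
      funext l
      rw [hscal, hderiveq]
    calc lqNorm q (fun x => lrSum r T (fun l =>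
          (‖(2:ℂ) ^ (-(j:ℤ)) * deriv (fun s => Aj Φ j (⇑f) x s) (l + h)‖₊ : ℝ≥0∞)))
        = lqNorm q (fun x => δe * lrSum r T (fun l => W x (l + h))) := by
          congr 1
          funext x
          exact h2 x
      _ = δe * lqNorm q (fun x => lrSum r T (fun l => W x (l + h))) :=
          lqNorm_const_mul hq δe hδet _
  -- main chain
  calc lqNorm q (fun x => Vvar r E (fun t => Aj Φ j (⇑f) x t))
      ≤ lqNorm q (fun x => 12 * (lrA x + lrD x)) := lqNorm_mono hpt
    _ = 12 * lqNorm q (fun x => lrA x + lrD x) :=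
        lqNorm_const_mul hq 12 (by norm_num) _
    _ ≤ 12 * (lqNorm q lrA + lqNorm q lrD) :=
        mul_le_mul_right (lqNorm_triangle hq hlrAm hlrDm) _
    _ ≤ 12 * (mixedNorm q r T (fun x t => Aj Φ j (⇑f) x t) +
          δe * ⨆ h ∈ Set.Icc (0:ℝ) δ,
            lqNorm q (fun x => lrSum r T (fun l => W x (l + h)))) := by
        refine mul_le_mul_right (add_le_add ?_ ?_) _
        · exact le_of_eq rfl
        · exact mixed_assembly hr hrq hδ T hWcont
    _ = 12 * (mixedNorm q r T (fun x t => Aj Φ j (⇑f) x t) +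
          ⨆ h ∈ Set.Icc (0:ℝ) δ,
            mixedNorm q r T (fun x t =>
              (2:ℂ) ^ (-(j:ℤ)) * deriv (fun s => Aj Φ j (⇑f) x s) (t + h))) := by
        rw [hsup]
    _ = ((12:ℝ≥0) : ℝ≥0∞) * (mixedNorm q r T (fun x t => Aj Φ j (⇑f) x t) +
          ⨆ h ∈ Set.Icc (0:ℝ) δ,
            mixedNorm q r T (fun x t =>
              (2:ℂ) ^ (-(j:ℤ)) * deriv (fun s => Aj Φ j (⇑f) x s) (t + h))) := by
        norm_num
end

section
/- Let d ≥ 2, 1 ≤ p, q < ∞, 1 ≤ r ≤ ∞, and let E ⊂ [1,2] contain at least two points. Suppose there is a constant C such that ‖V^r_E(𝒜f(x,·))‖_{L^q_x(ℝ^d)} ≤ C ‖f‖_{L^p(ℝ^d)} for all bounded measurable f with compact support. Then 1/p ≤ d/q. -/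
open MeasureTheory Real Set Metric FourierTransform
open scoped ENNReal NNReal RealInnerProductSpace Classical

lemma my_pow_sub_pow_le {b c : ℝ} (hc : 0 ≤ c) (hcb : c ≤ b) (n : ℕ) :
    b ^ n - c ^ n ≤ n * b ^ (n - 1) * (b - c) := by
  have hb : 0 ≤ b := hc.trans hcb
  rw [← geom_sum₂_mul b c n]
  have hsum : (∑ i ∈ Finset.range n, b ^ i * c ^ (n - 1 - i)) ≤ n * b ^ (n - 1) := by
    calc (∑ i ∈ Finset.range n, b ^ i * c ^ (n - 1 - i))
        ≤ ∑ _i ∈ Finset.range n, b ^ (n - 1) := by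
          apply Finset.sum_le_sum
          intro i hi
          calc b ^ i * c ^ (n - 1 - i) ≤ b ^ i * b ^ (n - 1 - i) := by
                gcongr
            _ = b ^ (n - 1) := by
                rw [← pow_add]
                congr 1
                have := Finset.mem_range.1 hi
                omega
      _ = n * b ^ (n - 1) := by
          simp [Finset.sum_const, nsmul_eq_mul]
  exact mul_le_mul_of_nonneg_right hsum (sub_nonneg.2 hcb)

/-- **Necessary condition (single shell example):**  if
`‖V^r_E (𝒜 f)‖_{L^q} ≤ C ‖f‖_{L^p}` holds for all bounded measurable compactly
supported `f`, and `E` contains at least two points, then `1/p ≤ d/q`. -/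
theorem statement18 (d : ℕ) (hd : 2 ≤ d) (p q : ℝ) (hp : 1 ≤ p) (hq : 1 ≤ q)
    (r : ℝ≥0∞) (hr : 1 ≤ r) (E : Set ℝ) (hE : E ⊆ Set.Icc (1:ℝ) 2)
    (hE2 : ∃ a ∈ E, ∃ b ∈ E, a ≠ b) (C : ℝ≥0)
    (hbound : ∀ f : Ed d → ℂ, Measurable f → (∃ M : ℝ, ∀ x, ‖f x‖ ≤ M) →
      HasCompactSupport f →
        lqNorm (ENNReal.ofReal q) (fun x => Vvar r E (fun t => sphAvg f x t)) ≤
          C * eLpNorm f (ENNReal.ofReal p) volume) :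
    1 / p ≤ (d:ℝ) / q := by
  by_contra hcon
  push_neg at hcon
  -- hcon : (d:ℝ)/q < 1/p
  obtain ⟨s, hsE, t, htE, hst⟩ : ∃ s ∈ E, ∃ t ∈ E, s < t := by
    obtain ⟨a, ha, b, hb, hab⟩ := hE2
    rcases hab.lt_or_gt with h | h
    · exact ⟨a, ha, b, hb, h⟩
    · exact ⟨b, hb, a, ha, h⟩
  have hs1 : 1 ≤ s := (hE hsE).1
  have hs2 : s ≤ 2 := (hE hsE).2
  have ht2 : t ≤ 2 := (hE htE).2
  have hp0 : 0 < p := zero_lt_one.trans_le hp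
  have hq0 : 0 < q := zero_lt_one.trans_le hq
  have hd0 : 0 < d := by omega
  haveI : Nonempty (Fin d) := ⟨⟨0, hd0⟩⟩
  set μS : Measure (Metric.sphere (0 : Ed d) 1) := (volume : Measure (Ed d)).toSphere with hμS
  have hdim : Module.finrank ℝ (Ed d) = d := finrank_euclideanSpace_fin
  have hball_pos : 0 < volume (Metric.ball (0 : Ed d) 1) :=
    measure_ball_pos _ _ one_pos
  have hball_fin : volume (Metric.ball (0 : Ed d) 1) < ⊤ := measure_ball_lt_top
  set ω : ℝ := (μS Set.univ).toReal with hω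
  have hω_pos : 0 < ω := by
    apply ENNReal.toReal_pos
    · rw [hμS, Measure.toSphere_apply_univ, hdim]
      exact mul_ne_zero (by exact_mod_cast hd0.ne') hball_pos.ne'
    · exact (measure_lt_top μS _).ne
  set vb : ℝ := (volume (Metric.ball (0 : Ed d) 1)).toReal with hvb
  have hvb_pos : 0 < vb := ENNReal.toReal_pos hball_pos.ne' hball_fin.ne
  set K : ℝ := d * 3 ^ (d - 1) * 2 with hKdef
  have hK_pos : 0 < K := by positivity
  -- the key inequality for every small δ
  have key : ∀ δ : ℝ, 0 < δ → δ < 1 / 2 → 2 * δ < t - s →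
      ω * ((δ / 2) ^ d * vb) ^ (1 / q) ≤ C * (K * vb * δ) ^ (1 / p) := by
    intro δ hδ0 hδhalf hδts
    set A : Set (Ed d) := {z | ‖z‖ ∈ Set.Icc (s - δ) (s + δ)} with hAdef
    have hA : MeasurableSet A := measurable_norm measurableSet_Icc
    set f : Ed d → ℂ := A.indicator (fun _ => 1) with hfdef
    have hf_meas : Measurable f := measurable_const.indicator hA
    have hf_bdd : ∃ M : ℝ, ∀ x, ‖f x‖ ≤ M := by
      refine ⟨1, fun x => ?_⟩
      by_cases hx : x ∈ A <;> simp [hfdef, Set.indicator_apply, hx]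
    have hf_supp : HasCompactSupport f := by
      apply HasCompactSupport.intro (isCompact_closedBall (0 : Ed d) (s + δ))
      intro x hx
      have hxn : ¬ ‖x‖ ≤ s + δ := by
        simpa [Metric.mem_closedBall, dist_zero_right] using hx
      exact Set.indicator_of_notMem (fun hmem => hxn hmem.2) _
    -- value of the spherical average at radius s
    have hval_s : ∀ x : Ed d, ‖x‖ ≤ δ / 2 → sphAvg f x s = ω • (1 : ℂ) := by
      intro x hx
      have hconst : ∀ y : Metric.sphere (0 : Ed d) 1, f (x - s • (y : Ed d)) = 1 := by
        intro y
        apply Set.indicator_of_mem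
        have hy : ‖(y : Ed d)‖ = 1 := by
          simpa using mem_sphere_zero_iff_norm.1 y.2
        have hsy : ‖s • (y : Ed d)‖ = s := by
          rw [norm_smul, hy, mul_one, Real.norm_eq_abs, abs_of_pos (by linarith)]
        have h1 : ‖s • (y : Ed d)‖ - ‖x‖ ≤ ‖x - s • (y : Ed d)‖ := by
          rw [norm_sub_rev]; exact norm_sub_norm_le _ _
        have h2 : ‖x - s • (y : Ed d)‖ ≤ ‖x‖ + ‖s • (y : Ed d)‖ := norm_sub_le _ _
        constructor
        · rw [hsy] at h1; linarith
        · rw [hsy] at h2; linarith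
      rw [sphAvg]
      simp only [hconst]
      rw [integral_const, hω]; rfl
    -- value of the spherical average at radius t
    have hval_t : ∀ x : Ed d, ‖x‖ ≤ δ / 2 → sphAvg f x t = 0 := by
      intro x hx
      have hzero : ∀ y : Metric.sphere (0 : Ed d) 1, f (x - t • (y : Ed d)) = 0 := by
        intro y
        apply Set.indicator_of_notMem
        have hy : ‖(y : Ed d)‖ = 1 := by
          simpa using mem_sphere_zero_iff_norm.1 y.2
        have hty : ‖t • (y : Ed d)‖ = t := by
          rw [norm_smul, hy, mul_one, Real.norm_eq_abs, abs_of_pos (by linarith)]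
        have h1 : ‖t • (y : Ed d)‖ - ‖x‖ ≤ ‖x - t • (y : Ed d)‖ := by
          rw [norm_sub_rev]; exact norm_sub_norm_le _ _
        rw [hty] at h1
        intro hmem
        have h2 : ‖x - t • (y : Ed d)‖ ≤ s + δ := hmem.2
        linarith
      rw [sphAvg]
      simp only [hzero]
      exact integral_zero _ _
    -- lower bound for the variation
    have hVvar : ∀ x : Ed d, ‖x‖ ≤ δ / 2 →
        ENNReal.ofReal ω ≤ Vvar r E (fun τ => sphAvg f x τ) := by
      intro x hx
      set F : ℝ → ℂ := fun τ => sphAvg f x τ with hF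
      set u : Fin 2 → ℝ := ![s, t] with hu
      have hu0 : u 0 = s := rfl
      have hu1 : u 1 = t := rfl
      have hmono : StrictMono u := by
        intro i j hij
        fin_cases i <;> fin_cases j <;>
          first
            | exact absurd hij (by decide)
            | exact hst
      have hmem : ∀ i, u i ∈ E := by
        intro i
        fin_cases i
        · exact hsE
        · exact htE
      have hc : ∀ i : Fin 1,
          (‖F (u i.succ) - F (u i.castSucc)‖₊ : ℝ≥0∞) = ENNReal.ofReal ω := by
        intro i
        have hi : i = 0 := Subsingleton.elim _ _
        subst hi
        have h1 : u (Fin.succ 0) = t := rfl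
        have h0 : u (Fin.castSucc 0) = s := rfl
        rw [h1, h0]
        have hFt : F t = 0 := hval_t x hx
        have hFs : F s = ω • (1 : ℂ) := hval_s x hx
        rw [hFt, hFs, zero_sub, nnnorm_neg]
        have hn : ‖ω • (1 : ℂ)‖ = ω := by
          rw [norm_smul, norm_one, mul_one, Real.norm_eq_abs, abs_of_pos hω_pos]
        have h' := ofReal_norm_eq_enorm (ω • (1 : ℂ)); rw [hn] at h'; exact h'.symm
      have hbody : (if r = ∞ then
            ⨆ i : Fin 1, (‖F (u i.succ) - F (u i.castSucc)‖₊ : ℝ≥0∞)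
          else (∑ i : Fin 1, (‖F (u i.succ) - F (u i.castSucc)‖₊ : ℝ≥0∞) ^ r.toReal)
              ^ (1 / r.toReal)) = ENNReal.ofReal ω := by
        split_ifs with hrtop
        · simp only [hc]
          exact ciSup_const
        · have hρ : r.toReal ≠ 0 := by
            have hr0 : (0 : ℝ≥0∞) < r := lt_of_lt_of_le zero_lt_one hr
            exact (ENNReal.toReal_pos hr0.ne' hrtop).ne'
          rw [Fin.sum_univ_one, hc 0, ← ENNReal.rpow_mul,
            mul_one_div_cancel hρ, ENNReal.rpow_one]
      calc ENNReal.ofReal ω = _ := hbody.symm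
        _ ≤ Vvar r E F := by
            rw [Vvar]
            exact le_iSup_of_le 1 (le_iSup_of_le u (le_iSup_of_le hmono
              (le_iSup_of_le hmem le_rfl)))
    -- lower bound for the L^q norm
    have hqtop : ENNReal.ofReal q ≠ ∞ := ENNReal.ofReal_ne_top
    have hqtr : (ENNReal.ofReal q).toReal = q := ENNReal.toReal_ofReal hq0.le
    have hlq : (ENNReal.ofReal ω ^ q * volume (Metric.ball (0 : Ed d) (δ / 2))) ^ (1 / q)
        ≤ lqNorm (ENNReal.ofReal q) (fun x => Vvar r E (fun τ => sphAvg f x τ)) := by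
      rw [lqNorm, if_neg hqtop, hqtr]
      apply ENNReal.rpow_le_rpow _ (by positivity)
      calc ENNReal.ofReal ω ^ q * volume (Metric.ball (0 : Ed d) (δ / 2))
          = ∫⁻ x, (Metric.ball (0 : Ed d) (δ / 2)).indicator
              (fun _ => ENNReal.ofReal ω ^ q) x := by
            rw [lintegral_indicator measurableSet_ball, setLIntegral_const]
        _ ≤ ∫⁻ x, (Vvar r E fun τ => sphAvg f x τ) ^ q := by
            apply lintegral_mono
            intro x
            by_cases hx : x ∈ Metric.ball (0 : Ed d) (δ / 2)
            · rw [Set.indicator_of_mem hx]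
              exact ENNReal.rpow_le_rpow
                (hVvar x (le_of_lt (by simpa [mem_ball_zero_iff] using hx))) hq0.le
            · rw [Set.indicator_of_notMem hx]
              exact zero_le
    -- upper bound for the L^p norm of f
    have hptop : ENNReal.ofReal p ≠ ∞ := ENNReal.ofReal_ne_top
    have hp0' : ENNReal.ofReal p ≠ 0 := by
      simp only [ne_eq, ENNReal.ofReal_eq_zero, not_le]
      linarith
    have hfLp : eLpNorm f (ENNReal.ofReal p) volume = volume A ^ (1 / p) := by
      rw [hfdef, eLpNorm_indicator_const hA hp0' hptop, ENNReal.toReal_ofReal hp0.le]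
      simp
    have hvolA : volume A ≤ ENNReal.ofReal (K * δ) * volume (Metric.ball (0 : Ed d) 1) := by
      have hsub : A ⊆ Metric.closedBall (0 : Ed d) (s + δ) \ Metric.ball (0 : Ed d) (s - δ) := by
        intro z hz
        obtain ⟨h1, h2⟩ := hz
        constructor
        · rw [mem_closedBall_zero_iff]; exact h2
        · simp only [mem_ball_zero_iff, not_lt]
          exact h1
      have hsdpos : (0 : ℝ) ≤ s - δ := by linarith
      calc volume A ≤ volume (Metric.closedBall (0 : Ed d) (s + δ) \
            Metric.ball (0 : Ed d) (s - δ)) := measure_mono hsub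
        _ = volume (Metric.closedBall (0 : Ed d) (s + δ))
            - volume (Metric.ball (0 : Ed d) (s - δ)) :=
            measure_diff (Metric.ball_subset_closedBall.trans
              (Metric.closedBall_subset_closedBall (by linarith)))
              measurableSet_ball.nullMeasurableSet measure_ball_lt_top.ne
        _ = (ENNReal.ofReal ((s + δ) ^ d) - ENNReal.ofReal ((s - δ) ^ d))
            * volume (Metric.ball (0 : Ed d) 1) := by
            rw [Measure.addHaar_closedBall _ _ (by linarith : (0:ℝ) ≤ s + δ),
              Measure.addHaar_ball _ _ hsdpos, hdim,
              ENNReal.sub_mul (fun _ _ => hball_fin.ne)]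
        _ = ENNReal.ofReal ((s + δ) ^ d - (s - δ) ^ d)
            * volume (Metric.ball (0 : Ed d) 1) := by
            rw [← ENNReal.ofReal_sub _ (by positivity)]
        _ ≤ ENNReal.ofReal (K * δ) * volume (Metric.ball (0 : Ed d) 1) := by
            gcongr
            have hb3 : s + δ ≤ 3 := by linarith
            calc (s + δ) ^ d - (s - δ) ^ d
                ≤ d * (s + δ) ^ (d - 1) * ((s + δ) - (s - δ)) :=
                  my_pow_sub_pow_le hsdpos (by linarith) d
              _ = d * (s + δ) ^ (d - 1) * (2 * δ) := by ring_nf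
              _ ≤ d * 3 ^ (d - 1) * (2 * δ) := by
                  gcongr
              _ = K * δ := by rw [hKdef]; ring
    -- put things together in ℝ≥0∞
    have hmain := hbound f hf_meas hf_bdd hf_supp
    have hchain : (ENNReal.ofReal ω ^ q * volume (Metric.ball (0 : Ed d) (δ / 2))) ^ (1 / q)
        ≤ (C : ℝ≥0∞) * (ENNReal.ofReal (K * δ) * volume (Metric.ball (0 : Ed d) 1)) ^ (1 / p) := by
      refine hlq.trans (hmain.trans ?_)
      rw [hfLp]
      gcongr
    have hballδ : volume (Metric.ball (0 : Ed d) (δ / 2))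
        = ENNReal.ofReal ((δ / 2) ^ d) * volume (Metric.ball (0 : Ed d) 1) := by
      rw [Measure.addHaar_ball _ _ (by linarith : (0:ℝ) ≤ δ / 2), hdim]
    rw [hballδ] at hchain
    -- pass to real numbers
    have hRfin : (C : ℝ≥0∞) * (ENNReal.ofReal (K * δ)
        * volume (Metric.ball (0 : Ed d) 1)) ^ (1 / p) ≠ ∞ := by
      apply ENNReal.mul_ne_top ENNReal.coe_ne_top
      apply ENNReal.rpow_ne_top_of_nonneg (by positivity)
      exact ENNReal.mul_ne_top ENNReal.ofReal_ne_top hball_fin.ne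
    have hreal := ENNReal.toReal_mono hRfin hchain
    have hL : ((ENNReal.ofReal ω ^ q * (ENNReal.ofReal ((δ / 2) ^ d)
        * volume (Metric.ball (0 : Ed d) 1))) ^ (1 / q)).toReal
        = ω * ((δ / 2) ^ d * vb) ^ (1 / q) := by
      rw [← ENNReal.toReal_rpow, ENNReal.toReal_mul, ENNReal.toReal_mul,
        ← ENNReal.toReal_rpow, ENNReal.toReal_ofReal hω_pos.le,
        ENNReal.toReal_ofReal (by positivity), ← hvb,
        Real.mul_rpow (by positivity) (by positivity),
        ← Real.rpow_mul hω_pos.le, mul_one_div_cancel hq0.ne', Real.rpow_one]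
    have hR : (((C : ℝ≥0∞)) * (ENNReal.ofReal (K * δ)
        * volume (Metric.ball (0 : Ed d) 1)) ^ (1 / p)).toReal
        = C * (K * vb * δ) ^ (1 / p) := by
      rw [ENNReal.toReal_mul, ENNReal.coe_toReal, ← ENNReal.toReal_rpow,
        ENNReal.toReal_mul, ENNReal.toReal_ofReal (by positivity), ← hvb]
      congr 2
      ring
    rw [hL, hR] at hreal
    exact hreal
  -- derive a contradiction from the key inequality
  set α : ℝ := (d : ℝ) / q with hα
  set β : ℝ := 1 / p with hβ
  have hαβ : α < β := hcon
  have hα0 : 0 ≤ α := by positivity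
  have hγ : 0 < β - α := by linarith
  set c1 : ℝ := ω * ((1:ℝ) / 2) ^ α * vb ^ (1 / q) with hc1
  set c2 : ℝ := (C : ℝ) * (K * vb) ^ β with hc2
  have hc1_pos : 0 < c1 := by
    apply mul_pos (mul_pos hω_pos (Real.rpow_pos_of_pos (by norm_num) _))
    exact Real.rpow_pos_of_pos hvb_pos _
  have hc2_nonneg : 0 ≤ c2 := by positivity
  have key2 : ∀ δ : ℝ, 0 < δ → δ < 1 / 2 → 2 * δ < t - s →
      c1 ≤ c2 * δ ^ (β - α) := by
    intro δ hδ0 hδhalf hδts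
    have h := key δ hδ0 hδhalf hδts
    have hLrw : ω * ((δ / 2) ^ d * vb) ^ (1 / q) = c1 * δ ^ α := by
      rw [Real.mul_rpow (by positivity) (by positivity)]
      have h1 : ((δ / 2) ^ d : ℝ) ^ (1 / q) = δ ^ α * ((1:ℝ) / 2) ^ α := by
        rw [← Real.rpow_natCast (δ / 2) d, ← Real.rpow_mul (by positivity),
          show ((d : ℝ) * (1 / q)) = α by rw [hα]; ring]
        rw [show (δ / 2 : ℝ) = δ * (1 / 2) by ring,
          Real.mul_rpow hδ0.le (by norm_num)]
      rw [h1, hc1]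
      ring
    have hRrw : (C : ℝ) * (K * vb * δ) ^ (1 / p) = c2 * δ ^ β := by
      rw [Real.mul_rpow (by positivity) hδ0.le, hc2, hβ]
      ring
    rw [hLrw, hRrw] at h
    have hβrw : δ ^ β = δ ^ (β - α) * δ ^ α := by
      rw [← Real.rpow_add hδ0]
      ring_nf
    rw [hβrw, ← mul_assoc] at h
    exact le_of_mul_le_mul_right (by linarith [h]) (Real.rpow_pos_of_pos hδ0 α)
  -- choose δ small enough
  set ε : ℝ := c1 / (2 * (c2 + 1)) with hε
  have hε_pos : 0 < ε := by
    apply div_pos hc1_pos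
    linarith
  set δ₀ : ℝ := min (1 / 2) ((t - s) / 2) with hδ₀
  have hδ₀_pos : 0 < δ₀ := by
    apply lt_min (by norm_num)
    linarith
  set δ : ℝ := min (δ₀ / 2) (ε ^ (1 / (β - α))) with hδ
  have hδ_pos : 0 < δ :=
    lt_min (by linarith) (Real.rpow_pos_of_pos hε_pos _)
  have hδ_half : δ < 1 / 2 := by
    have h1 : δ ≤ δ₀ / 2 := min_le_left _ _
    have h2 : δ₀ ≤ 1 / 2 := min_le_left _ _
    linarith
  have hδ_ts : 2 * δ < t - s := by
    have h1 : δ ≤ δ₀ / 2 := min_le_left _ _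
    have h2 : δ₀ ≤ (t - s) / 2 := min_le_right _ _
    linarith
  have hfinal := key2 δ hδ_pos hδ_half hδ_ts
  have hδγ : δ ^ (β - α) ≤ ε := by
    have h1 : δ ≤ ε ^ (1 / (β - α)) := min_le_right _ _
    calc δ ^ (β - α) ≤ (ε ^ (1 / (β - α))) ^ (β - α) :=
          Real.rpow_le_rpow hδ_pos.le h1 hγ.le
      _ = ε := by
          rw [← Real.rpow_mul hε_pos.le, one_div_mul_cancel hγ.ne', Real.rpow_one]
  have : c1 ≤ c1 / 2 := by
    calc c1 ≤ c2 * δ ^ (β - α) := hfinal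
      _ ≤ c2 * ε := by
          exact mul_le_mul_of_nonneg_left hδγ hc2_nonneg
      _ ≤ (c2 + 1) * ε := by
          apply mul_le_mul_of_nonneg_right (by linarith) hε_pos.le
      _ = c1 / 2 := by
          rw [hε]
          field_simp
  linarith
end
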